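/- arXiv:2206.00561 — 6 statements merged into one kernel-verified Lean document; each statement's English description precedes it below -/
import Mathlib

section
/- For all integers k ≥ 1 and q ≥ 1, if Q is a finite multiset of integers each satisfying 0 ≤ a ≤ k, and qk ≤ Σ_{a∈Q} a < (q+1)k, then Q can be partitioned into q submultisets Q_1, …, Q_q such that Σ_{a∈Q_i} a < 2k for each i ∈ [q]. -/
lemma greedy_chunk (k : ℤ) (hk : 1 ≤ k) (Q : Multiset ℤ)
    (hmem : ∀ a ∈ Q, 0 ≤ a ∧ a ≤ k) (h : k ≤ Q.sum) :
    ∃ S, S ≤ Q ∧ k ≤ S.sum ∧ S.sum < 2 * k := by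
  induction Q using Multiset.induction_on with
  | empty => simp at h; omega
  | cons a Q' ih =>
    by_cases h' : k ≤ Q'.sum
    · obtain ⟨S, hS, h1, h2⟩ := ih (fun x hx => hmem x (Multiset.mem_cons_of_mem hx)) h'
      exact ⟨S, le_trans hS (Multiset.le_cons_self _ _), h1, h2⟩
    · refine ⟨a ::ₘ Q', le_refl _, h, ?_⟩
      have ha := hmem a (Multiset.mem_cons_self a Q')
      rw [Multiset.sum_cons]
      omega

lemma aux_partition (k : ℤ) (hk : 1 ≤ k) : ∀ q : ℕ, 1 ≤ q →
    ∀ Q : Multiset ℤ, (∀ a ∈ Q, 0 ≤ a ∧ a ≤ k) → Q.sum < ((q : ℤ) + 1) * k →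
    ∃ P : Fin q → Multiset ℤ, Q = ∑ i, P i ∧ ∀ i, (P i).sum < 2 * k := by
  intro q hq
  induction q, hq using Nat.le_induction with
  | base =>
    intro Q hmem hhigh
    refine ⟨fun _ => Q, ?_, fun i => by push_cast at hhigh; linarith⟩
    simp
  | succ q hq ih =>
    intro Q hmem hhigh
    by_cases hcase : Q.sum < ((q : ℤ) + 1) * k
    · obtain ⟨P, hP, hPs⟩ := ih Q hmem hcase
      refine ⟨Fin.cons 0 P, ?_, ?_⟩
      · rw [Fin.sum_cons, hP]; simp
      · intro i
        induction i using Fin.cases with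
        | zero => simp; linarith
        | succ j => simpa using hPs j
    · push_neg at hcase
      have hk' : k ≤ Q.sum := by
        have : (0:ℤ) ≤ (q:ℤ) := Int.ofNat_nonneg q
        nlinarith
      obtain ⟨S, hS, h1, h2⟩ := greedy_chunk k hk Q hmem hk'
      have hsplit : S + (Q - S) = Q := add_tsub_cancel_of_le hS
      have hsum : S.sum + (Q - S).sum = Q.sum := by
        rw [← Multiset.sum_add, hsplit]
      have hrestmem : ∀ a ∈ Q - S, 0 ≤ a ∧ a ≤ k := fun a ha =>
        hmem a (Multiset.mem_of_le (Multiset.sub_le_self _ _) ha)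
      have hresthigh : (Q - S).sum < ((q : ℤ) + 1) * k := by
        push_cast at hhigh ⊢
        linarith
      obtain ⟨P, hP, hPs⟩ := ih (Q - S) hrestmem hresthigh
      refine ⟨Fin.cons S P, ?_, ?_⟩
      · rw [Fin.sum_cons, ← hP, hsplit]
      · intro i
        induction i using Fin.cases with
        | zero => simpa using h2
        | succ j => simpa using hPs j

/-- For all integers `k ≥ 1` and `q ≥ 1`, if `Q` is a finite multiset of integers each
satisfying `0 ≤ a ≤ k`, and `q*k ≤ Σ_{a∈Q} a < (q+1)*k`, then `Q` can be partitioned into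
`q` submultisets each with sum of elements less than `2*k`. -/
theorem multiset_partition_bounded_sums (k : ℤ) (hk : 1 ≤ k) (q : ℕ) (hq : 1 ≤ q)
    (Q : Multiset ℤ) (hmem : ∀ a ∈ Q, 0 ≤ a ∧ a ≤ k)
    (hlow : (q : ℤ) * k ≤ Q.sum) (hhigh : Q.sum < ((q : ℤ) + 1) * k) :
    ∃ P : Fin q → Multiset ℤ, Q = ∑ i, P i ∧ ∀ i, (P i).sum < 2 * k := by
  exact aux_partition k hk q hq Q hmem hhigh
end

section
/- Fix an integer k ≥ 1 and a finite set of colors C with |C| ≥ 3k − 1. If a graph G is C-inextensible, then there exists a good C-template on G, i.e., a C-template T = (S, c, F) witnessing the C-inextensibility of G such that |F(v)| ≤ k − 1 for every vertex v ∉ S. -/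
open Finset

variable {V : Type*}

/-- A proper `C`-coloring of `G`: every vertex gets a color in `C` and adjacent
vertices get different colors. -/
def ProperColoring (G : SimpleGraph V) (C : Finset ℕ) (f : V → ℕ) : Prop :=
  (∀ v, f v ∈ C) ∧ ∀ ⦃u v⦄, G.Adj u v → f u ≠ f v

/-- A proper `C`-coloring `f` of `G` respects the template `(S, c, F)` if it agrees
with `c` on `S` and avoids the forbidden list `F v` at each `v ∉ S`. -/
def Respects (G : SimpleGraph V) (C : Finset ℕ) (S : Finset V)
    (c : V → ℕ) (F : V → Finset ℕ) (f : V → ℕ) : Prop :=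
  ProperColoring G C f ∧ (∀ v ∈ S, f v = c v) ∧ ∀ v ∉ S, f v ∉ F v

/-- `(S, c, F)` is a `C`-template on `G` (with `c` a proper `C`-coloring of `G[S]` and
`F v ⊆ C` for `v ∉ S`) witnessing the `C`-inextensibility of `G`:
its `k`-cost `k|S| + Σ_{v∉S}|F(v)|` is less than `2k²`, `|F(v)| ≤ k` for all `v ∉ S`,
and no proper `C`-coloring of `G` respects it. -/
def Witnesses [Fintype V] [DecidableEq V] (k : ℕ) (G : SimpleGraph V) (C : Finset ℕ)
    (S : Finset V) (c : V → ℕ) (F : V → Finset ℕ) : Prop :=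
  (∀ v ∈ S, c v ∈ C) ∧ (∀ u ∈ S, ∀ v ∈ S, G.Adj u v → c u ≠ c v) ∧
  (∀ v ∉ S, F v ⊆ C) ∧
  k * S.card + ∑ v ∈ Sᶜ, (F v).card < 2 * k ^ 2 ∧
  (∀ v ∉ S, (F v).card ≤ k) ∧
  ¬ ∃ f : V → ℕ, Respects G C S c F f

/-- `G` is `C`-inextensible if some `C`-template witnesses its inextensibility. -/
def Inextensible [Fintype V] [DecidableEq V] (k : ℕ) (G : SimpleGraph V)
    (C : Finset ℕ) : Prop :=
  ∃ S c F, Witnesses k G C S c F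

/-- `G` is minimally `C`-inextensible: it is `C`-inextensible but every proper induced
subgraph is `C`-extensible. -/
def MinInextensible [Fintype V] [DecidableEq V] (k : ℕ) (G : SimpleGraph V)
    (C : Finset ℕ) : Prop :=
  Inextensible k G C ∧ ∀ A : Finset V, A ≠ Finset.univ →
    ¬ Inextensible k (SimpleGraph.induce (↑A : Set V) G) C

/-- If `|C| ≥ 3k − 1` and `G` is `C`-inextensible, then there is a good template on `G`:
a witnessing template with `|F(v)| ≤ k − 1` for every `v ∉ S`. -/
theorem exists_good_template [Fintype V] [DecidableEq V] (k : ℕ) (hk : 1 ≤ k)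
    (G : SimpleGraph V) (C : Finset ℕ) (hC : 3 * k - 1 ≤ C.card)
    (h : Inextensible k G C) :
    ∃ S c F, Witnesses k G C S c F ∧ ∀ v ∉ S, (F v).card ≤ k - 1 := by

  classical
  suffices H : ∀ n (S : Finset V) (c : V → ℕ) (F : V → Finset ℕ),
      (Sᶜ.filter fun v => (F v).card = k).card ≤ n → Witnesses k G C S c F →
      ∃ S c F, Witnesses k G C S c F ∧ ∀ v ∉ S, (F v).card ≤ k - 1 by
    obtain ⟨S, c, F, hW⟩ := h
    exact H _ S c F le_rfl hW
  intro n
  induction n with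
  | zero =>
    intro S c F hcard hW
    refine ⟨S, c, F, hW, fun v hv => ?_⟩
    have h5 := hW.2.2.2.2.1 v hv
    have hne : (F v).card ≠ k := by
      intro h'
      have hmem : v ∈ Sᶜ.filter fun v => (F v).card = k := by
        simp [Finset.mem_filter, hv, h']
      have := Finset.card_pos.2 ⟨v, hmem⟩
      omega
    omega
  | succ n ih =>
    intro S c F hcard hW
    obtain ⟨h1, h2, h3, h4, h5, h6⟩ := hW
    by_cases hex : ∃ v ∈ Sᶜ, (F v).card = k
    · obtain ⟨v, hv, hFv⟩ := hex
      have hvS : v ∉ S := Finset.mem_compl.1 hv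
      -- bound on |S|
      have hsum : (F v).card ≤ ∑ w ∈ Sᶜ, (F w).card :=
        Finset.single_le_sum (f := fun w => (F w).card) (fun _ _ => Nat.zero_le _) hv
      have hScard : S.card + 1 < 2 * k := by
        have hkk : k * (S.card + 1) < k * (2 * k) := by nlinarith
        exact Nat.lt_of_mul_lt_mul_left hkk
      -- choose a fresh color
      set B : Finset ℕ := F v ∪ (S.filter (G.Adj v)).image c with hBdef
      have hB : B.card ≤ 3 * k - 2 := by
        have h1' : B.card ≤ (F v).card + ((S.filter (G.Adj v)).image c).card :=
          Finset.card_union_le _ _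
        have h2' : ((S.filter (G.Adj v)).image c).card ≤ S.card :=
          le_trans (Finset.card_image_le) (Finset.card_filter_le _ _)
        omega
      have hBC : B.card < C.card := by omega
      obtain ⟨a, haC, haB⟩ : ∃ a ∈ C, a ∉ B := by
        have : (C \ B).Nonempty := by
          rw [← Finset.card_pos]
          have := Finset.le_card_sdiff B C
          omega
        obtain ⟨a, ha⟩ := this
        exact ⟨a, (Finset.mem_sdiff.1 ha).1, (Finset.mem_sdiff.1 ha).2⟩
      have haF : a ∉ F v := fun h' => haB (Finset.mem_union_left _ h')
      have haAdj : ∀ u ∈ S, G.Adj v u → a ≠ c u := by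
        intro u hu hadj heq
        exact haB (Finset.mem_union_right _ (Finset.mem_image.2
          ⟨u, Finset.mem_filter.2 ⟨hu, hadj⟩, heq.symm⟩))
      set c' : V → ℕ := Function.update c v a with hc'
      apply ih (insert v S) c' F
      · -- measure decreases
        have hcompl : (insert v S)ᶜ = Sᶜ.erase v := by
          ext w; simp [Finset.mem_erase, and_comm]
        have hvmem : v ∈ Sᶜ.filter fun w => (F w).card = k :=
          Finset.mem_filter.2 ⟨hv, hFv⟩
        rw [hcompl, Finset.filter_erase, Finset.card_erase_of_mem hvmem]
        have := Finset.card_pos.2 ⟨v, hvmem⟩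
        omega
      · refine ⟨?_, ?_, ?_, ?_, ?_, ?_⟩
        · intro w hw
          rcases Finset.mem_insert.1 hw with rfl | hw
          · simpa [hc'] using haC
          · have : w ≠ v := fun h' => hvS (h' ▸ hw)
            simpa [hc', Function.update_of_ne this] using h1 w hw
        · intro u hu w hw hadj
          by_cases huv : u = v
          · by_cases hwv : w = v
            · exact absurd (huv ▸ hwv ▸ hadj) (G.irrefl)
            · have hwS : w ∈ S := (Finset.mem_insert.1 hw).resolve_left hwv
              subst huv
              simpa [hc', Function.update_of_ne hwv] using haAdj w hwS hadj
          · have huS : u ∈ S := (Finset.mem_insert.1 hu).resolve_left huv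
            by_cases hwv : w = v
            · subst hwv
              simp only [hc', Function.update_of_ne huv, Function.update_self]
              exact (haAdj u huS hadj.symm).symm
            · simpa [hc', Function.update_of_ne huv, Function.update_of_ne hwv]
                using h2 u huS w ((Finset.mem_insert.1 hw).resolve_left hwv) hadj
        · intro w hw
          exact h3 w (fun h' => hw (Finset.mem_insert_of_mem h'))
        · have hcompl : (insert v S)ᶜ = Sᶜ.erase v := by
            ext w; simp [Finset.mem_erase, and_comm]
          have hsum' : ∑ w ∈ Sᶜ.erase v, (F w).card + (F v).card
              = ∑ w ∈ Sᶜ, (F w).card := Finset.sum_erase_add _ _ hv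
          rw [hcompl, Finset.card_insert_of_notMem hvS]
          have hms : k * (S.card + 1) = k * S.card + k := by ring
          omega
        · intro w hw
          exact h5 w (fun h' => hw (Finset.mem_insert_of_mem h'))
        · rintro ⟨f, hf1, hf2, hf3⟩
          apply h6
          refine ⟨f, hf1, ?_, ?_⟩
          · intro w hw
            have hwv : w ≠ v := fun h' => hvS (h' ▸ hw)
            have := hf2 w (Finset.mem_insert_of_mem hw)
            rwa [hc', Function.update_of_ne hwv] at this
          · intro w hw
            by_cases hwv : w = v
            · subst hwv
              have := hf2 w (Finset.mem_insert_self _ _)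
              rw [hc', Function.update_self] at this
              rw [this]; exact haF
            · exact hf3 w (by simp [Finset.mem_insert, hwv, hw])
    · refine ⟨S, c, F, ⟨h1, h2, h3, h4, h5, h6⟩, fun v hv => ?_⟩
      have : (F v).card ≠ k := fun h' => hex ⟨v, Finset.mem_compl.2 hv, h'⟩
      have := h5 v hv
      omega
end

section
/- Fix an integer k ≥ 1 and a finite color set C with |C| ≥ 3k − 1. Let G be a minimally C-inextensible graph with a good template T = (S, c, F). Then every vertex v ∈ V(G)∖S has more than |C| − k neighbors in G. -/
open Finset

variable {V : Type*}

/-- If `|C| ≥ 3k − 1`, `G` is minimally `C`-inextensible with good template `(S, c, F)`,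
then every vertex `v ∉ S` has more than `|C| − k` neighbors in `G`. -/
theorem uncolored_vertex_many_neighbors [Fintype V] [DecidableEq V]
    (k : ℕ) (hk : 1 ≤ k) (G : SimpleGraph V) [DecidableRel G.Adj] (C : Finset ℕ)
    (hC : 3 * k - 1 ≤ C.card) (hmin : MinInextensible k G C)
    (S : Finset V) (c : V → ℕ) (F : V → Finset ℕ)
    (hT : Witnesses k G C S c F) (hgood : ∀ v ∉ S, (F v).card ≤ k - 1) :
    ∀ v ∉ S, C.card - k < (G.neighborFinset v).card := by
  intro v hv
  by_contra hdeg
  push_neg at hdeg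
  obtain ⟨hc1, hc2, hFC, hcost, hFk, hno⟩ := hT
  set A : Finset V := Finset.univ.erase v with hA
  have hAne : A ≠ Finset.univ := by
    intro h
    have : v ∈ A := h ▸ Finset.mem_univ v
    simp [hA] at this
  have hmemA : ∀ x : V, x ∈ (↑A : Set V) ↔ x ≠ v := by
    intro x; simp [hA]
  set G' := SimpleGraph.induce (↑A : Set V) G with hG'
  set S' : Finset (↑A : Set V) := Finset.univ.filter (fun x => (x : V) ∈ S) with hS'
  have hmemS' : ∀ x : (↑A : Set V), x ∈ S' ↔ (x : V) ∈ S := by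
    intro x; simp [hS']
  have hnotin : ¬ Inextensible k G' C := hmin.2 A hAne
  have hSsub : ∀ s ∈ S, s ∈ (↑A : Set V) := fun s hs =>
    (hmemA s).2 (fun h => hv (h ▸ hs))
  have hScard : S'.card = S.card := by
    refine Finset.card_bij (fun (x : (↑A : Set V)) _ => (x : V)) ?_ ?_ ?_
    · intro x hx; exact (hmemS' x).1 hx
    · intro x _ y _ h; exact Subtype.ext h
    · intro s hs; exact ⟨⟨s, hSsub s hs⟩, (hmemS' _).2 hs, rfl⟩
  have hsum : ∑ x ∈ S'ᶜ, (F (x : V)).card ≤ ∑ u ∈ Sᶜ, (F u).card := by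
    have heq : ∑ x ∈ S'ᶜ, (F (x : V)).card = ∑ u ∈ Sᶜ.erase v, (F u).card := by
      refine Finset.sum_bij (fun (x : (↑A : Set V)) _ => (x : V)) ?_ ?_ ?_ ?_
      · intro x hx
        rw [Finset.mem_compl, hmemS'] at hx
        rw [Finset.mem_erase, Finset.mem_compl]
        exact ⟨(hmemA x).1 x.2, hx⟩
      · intro x _ y _ h; exact Subtype.ext h
      · intro u hu
        rw [Finset.mem_erase, Finset.mem_compl] at hu
        refine ⟨⟨u, (hmemA u).2 hu.1⟩, ?_, rfl⟩
        rw [Finset.mem_compl, hmemS']; exact hu.2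
      · intro x _; rfl
    rw [heq]
    exact Finset.sum_le_sum_of_subset (Finset.erase_subset _ _)
  have hex : ∃ f' : (↑A : Set V) → ℕ,
      Respects G' C S' (fun x => c x) (fun x => F x) f' := by
    by_contra hnef
    apply hnotin
    refine ⟨S', fun x => c x, fun x => F x, ?_, ?_, ?_, ?_, ?_, hnef⟩
    · intro x hx; exact hc1 _ ((hmemS' x).1 hx)
    · intro a ha b hb hab
      exact hc2 _ ((hmemS' a).1 ha) _ ((hmemS' b).1 hb) hab
    · intro x hx; exact hFC _ (fun h => hx ((hmemS' x).2 h))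
    · calc k * S'.card + ∑ x ∈ S'ᶜ, (F (x : V)).card
          ≤ k * S.card + ∑ u ∈ Sᶜ, (F u).card := by rw [hScard]; omega
        _ < 2 * k ^ 2 := hcost
    · intro x hx; exact hFk _ (fun h => hx ((hmemS' x).2 h))
  obtain ⟨f', hf'⟩ := hex
  set bad : Finset ℕ := F v ∪ (G.neighborFinset v).image
      (fun w => if h : w ∈ (↑A : Set V) then f' ⟨w, h⟩ else 0) with hbad
  have hbadcard : bad.card < C.card := by
    have h1 : bad.card ≤ (F v).card + (G.neighborFinset v).card :=
      le_trans (Finset.card_union_le _ _)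
        (by gcongr; exact Finset.card_image_le)
    have h2 := hgood v hv
    omega
  have hne : (C \ bad).Nonempty := by
    rw [← Finset.card_pos]
    have := Finset.le_card_sdiff bad C
    omega
  obtain ⟨c₀, hc₀⟩ := hne
  rw [Finset.mem_sdiff] at hc₀
  set f : V → ℕ := fun x => if h : x = v then c₀ else f' ⟨x, (hmemA x).2 h⟩ with hf
  apply hno
  refine ⟨f, ⟨?_, ?_⟩, ?_, ?_⟩
  · intro x
    by_cases hx : x = v
    · simp only [hf, hx, dif_pos]; exact hc₀.1
    · simp only [hf, dif_neg hx]; exact hf'.1.1 _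
  · intro u w huw hfe
    by_cases hu : u = v
    · have hw : w ≠ v := fun h => (G.ne_of_adj huw) (hu.trans h.symm)
      have hwmem : w ∈ G.neighborFinset v := by
        rw [SimpleGraph.mem_neighborFinset]; exact hu ▸ huw
      have hin : f w ∈ bad := by
        rw [hbad, Finset.mem_union]
        right
        refine Finset.mem_image.2 ⟨w, hwmem, ?_⟩
        rw [dif_pos ((hmemA w).2 hw)]
        simp only [hf, dif_neg hw]
      rw [← hfe] at hin
      simp only [hf, hu, dif_pos] at hin
      exact hc₀.2 hin
    · by_cases hw : w = v
      · have hu' : u ≠ v := hu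
        have humem : u ∈ G.neighborFinset v := by
          rw [SimpleGraph.mem_neighborFinset]; exact (hw ▸ huw).symm
        have hin : f u ∈ bad := by
          rw [hbad, Finset.mem_union]
          right
          refine Finset.mem_image.2 ⟨u, humem, ?_⟩
          rw [dif_pos ((hmemA u).2 hu')]
          simp only [hf, dif_neg hu']
        rw [hfe] at hin
        simp only [hf, hw, dif_pos] at hin
        exact hc₀.2 hin
      · have hadj : G'.Adj ⟨u, (hmemA u).2 hu⟩ ⟨w, (hmemA w).2 hw⟩ := huw
        apply hf'.1.2 hadj
        simpa only [hf, dif_neg hu, dif_neg hw] using hfe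
  · intro s hs
    have hsv : s ≠ v := fun h => hv (h ▸ hs)
    simp only [hf, dif_neg hsv]
    exact hf'.2.1 ⟨s, (hmemA s).2 hsv⟩ ((hmemS' _).2 hs)
  · intro x hx
    by_cases hxv : x = v
    · simp only [hf, hxv, dif_pos]
      intro h
      exact hc₀.2 (Finset.mem_union_left _ (hxv ▸ h))
    · simp only [hf, dif_neg hxv]
      exact hf'.2.2 ⟨x, (hmemA x).2 hxv⟩ (fun h => hx ((hmemS' _).1 h))
end

section
/- Fix an integer k ≥ 1 and a finite color set C with |C| ≥ 3k − 1. Then every minimally C-inextensible graph G has more than |C| − k + 1 vertices and is (k+1)-connected. -/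
open Finset

variable {V : Type*}

/-- `G` is `n`-connected: it has more than `n` vertices and no cutset of fewer than `n`
vertices (a cutset splits the remaining vertices into two nonempty parts with no edges
between them). -/
def KConnected (G : SimpleGraph V) (n : ℕ) : Prop :=
  n < Nat.card V ∧ ∀ X : Set V, X.ncard < n →
    ¬ ∃ A B : Set V, A.Nonempty ∧ B.Nonempty ∧ Disjoint A B ∧ A ∪ B = Xᶜ ∧
        ∀ a ∈ A, ∀ b ∈ B, ¬ G.Adj a b

section Aux

variable [Fintype V] [DecidableEq V]

private lemma sum_coe_le (Af : Finset V) (T : Finset ↥(↑Af : Set V)) (g : V → ℕ)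
    (W : Finset V) (hsub : ∀ x ∈ T, (x : V) ∈ W) :
    ∑ x ∈ T, g ↑x ≤ ∑ v ∈ W, g v := by
  classical
  have hinj : ∀ x ∈ T, ∀ y ∈ T, (x : V) = (y : V) → x = y :=
    fun x _ y _ hxy => Subtype.ext hxy
  have h1 : ∑ v ∈ T.image (fun x : ↥(↑Af : Set V) => (x : V)), g v = ∑ x ∈ T, g ↑x :=
    Finset.sum_image hinj
  rw [← h1]
  apply Finset.sum_le_sum_of_subset
  intro v hv
  obtain ⟨x, hx, rfl⟩ := Finset.mem_image.mp hv
  exact hsub x hx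

private lemma card_coe_le (Af : Finset V) (T : Finset ↥(↑Af : Set V))
    (W : Finset V) (hsub : ∀ x ∈ T, (x : V) ∈ W) :
    T.card ≤ W.card := by
  rw [Finset.card_eq_sum_ones, Finset.card_eq_sum_ones]
  exact sum_coe_le Af T (fun _ => 1) W hsub

private lemma greedy (L : V → Finset ℕ) (Y : Finset V)
    (hY : ∀ x ∈ Y, Y.card ≤ (L x).card) :
    ∃ g : V → ℕ, (∀ x ∈ Y, g x ∈ L x) ∧ ∀ x ∈ Y, ∀ y ∈ Y, x ≠ y → g x ≠ g y := by
  classical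
  induction Y using Finset.induction_on with
  | empty => exact ⟨fun _ => 0, by simp, by simp⟩
  | @insert a Y' ha ih =>
    obtain ⟨g', hg1, hg2⟩ := ih (fun x hx => by
      have h1 := hY x (Finset.mem_insert_of_mem hx)
      have h2 : Y'.card ≤ (insert a Y').card := Finset.card_le_card (Finset.subset_insert _ _)
      omega)
    have hz : (L a \ Y'.image g').Nonempty := by
      rw [← Finset.card_pos]
      have h1 := hY a (Finset.mem_insert_self a Y')
      have h2 : (Y'.image g').card ≤ Y'.card := Finset.card_image_le
      have h3 := Finset.card_le_card_sdiff_add_card (s := L a) (t := Y'.image g')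
      rw [Finset.card_insert_of_notMem ha] at h1
      omega
    obtain ⟨z, hz⟩ := hz
    rw [Finset.mem_sdiff] at hz
    refine ⟨fun v => if v = a then z else g' v, ?_, ?_⟩
    · intro x hx
      rcases Finset.mem_insert.mp hx with rfl | hx
      · simpa using hz.1
      · have : x ≠ a := fun h => ha (h ▸ hx)
        simpa [this] using hg1 x hx
    · intro x hx y hy hxy
      simp only []
      by_cases hxa : x = a
      · have hya : y ≠ a := fun h => hxy (hxa.trans h.symm)
        have hy' : y ∈ Y' := (Finset.mem_insert.mp hy).resolve_left hya
        rw [if_pos hxa, if_neg hya]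
        intro h
        exact hz.2 (Finset.mem_image.mpr ⟨y, hy', h.symm⟩)
      · by_cases hya : y = a
        · have hx' : x ∈ Y' := (Finset.mem_insert.mp hx).resolve_left hxa
          rw [if_neg hxa, if_pos hya]
          intro h
          exact hz.2 (Finset.mem_image.mpr ⟨x, hx', h⟩)
        · have hx' : x ∈ Y' := (Finset.mem_insert.mp hx).resolve_left hxa
          have hy' : y ∈ Y' := (Finset.mem_insert.mp hy).resolve_left hya
          rw [if_neg hxa, if_neg hya]
          exact hg2 x hx' y hy' hxy

private lemma extend_of_min {k : ℕ} {G : SimpleGraph V} {C : Finset ℕ}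
    (h : MinInextensible k G C) (Af : Finset V) (hAf : Af ≠ Finset.univ)
    (S' : Finset ↥(↑Af : Set V)) (c' : ↥(↑Af : Set V) → ℕ) (F' : ↥(↑Af : Set V) → Finset ℕ)
    (h1 : ∀ v ∈ S', c' v ∈ C)
    (h2 : ∀ u ∈ S', ∀ v ∈ S', (SimpleGraph.induce (↑Af : Set V) G).Adj u v → c' u ≠ c' v)
    (h3 : ∀ v ∉ S', F' v ⊆ C)
    (h4 : k * S'.card + ∑ v ∈ S'ᶜ, (F' v).card < 2 * k ^ 2)
    (h5 : ∀ v ∉ S', (F' v).card ≤ k) :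
    ∃ f, Respects (SimpleGraph.induce (↑Af : Set V) G) C S' c' F' f := by
  have hni := h.2 Af hAf
  simp only [Inextensible, not_exists] at hni
  by_contra hf
  exact hni S' c' F' ⟨h1, h2, h3, h4, h5, hf⟩
end Aux

section Main
variable [Fintype V] [DecidableEq V]
variable {k : ℕ} {G : SimpleGraph V} {C : Finset ℕ} {S : Finset V} {c : V → ℕ}
    {F : V → Finset ℕ}

open scoped Classical in
private lemma E1
    (h : MinInextensible k G C)
    (hc1 : ∀ v ∈ S, c v ∈ C)
    (hc2 : ∀ u ∈ S, ∀ v ∈ S, G.Adj u v → c u ≠ c v)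
    (hF3 : ∀ v ∉ S, F v ⊆ C)
    (hW : k * S.card + ∑ v ∈ Sᶜ, (F v).card < 2 * k ^ 2)
    (hcap : ∀ v ∉ S, (F v).card ≤ k)
    (v₀ : V) (hv₀ : v₀ ∉ S)
    (hdeg : (F v₀).card + (Finset.univ.filter (fun u => G.Adj v₀ u)).card < C.card) :
    ∃ f, Respects G C S c F f := by
  set Af : Finset V := Finset.univ.erase v₀ with hAfdef
  have hAf : Af ≠ Finset.univ := by
    intro hh
    have : v₀ ∈ Af := hh ▸ Finset.mem_univ v₀
    simp [hAfdef] at this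
  have hmemAf : ∀ v : V, v ≠ v₀ → v ∈ Af := by
    intro v hv; simp [hAfdef, hv]
  set S' : Finset ↥(↑Af : Set V) :=
    Finset.univ.filter (fun x : ↥(↑Af : Set V) => (x : V) ∈ S) with hS'def
  have hmemS' : ∀ x : ↥(↑Af : Set V), x ∈ S' ↔ (x : V) ∈ S := by
    intro x; simp [hS'def]
  have hadj : ∀ u v : ↥(↑Af : Set V),
      (SimpleGraph.induce (↑Af : Set V) G).Adj u v ↔ G.Adj ↑u ↑v := by
    intro u v; exact Iff.rfl
  have hcardS' : S'.card ≤ S.card :=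
    card_coe_le Af S' S (fun x hx => (hmemS' x).1 hx)
  have hsumS' : ∑ x ∈ S'ᶜ, (F ↑x).card ≤ ∑ v ∈ Sᶜ, (F v).card := by
    apply sum_coe_le Af S'ᶜ (fun v => (F v).card) Sᶜ
    intro x hx
    rw [Finset.mem_compl] at hx ⊢
    exact fun hs => hx ((hmemS' x).2 hs)
  obtain ⟨f', hf'⟩ := extend_of_min h Af hAf S' (fun x => c ↑x) (fun x => F ↑x)
    (fun v hv => hc1 _ ((hmemS' v).1 hv))
    (fun u hu v hv hl => hc2 _ ((hmemS' u).1 hu) _ ((hmemS' v).1 hv) ((hadj u v).1 hl))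
    (fun v hv => hF3 _ (fun hs => hv ((hmemS' v).2 hs)))
    (by
      calc k * S'.card + ∑ x ∈ S'ᶜ, (F ↑x).card
          ≤ k * S.card + ∑ v ∈ Sᶜ, (F v).card := by
            exact Nat.add_le_add (Nat.mul_le_mul_left k hcardS') hsumS'
        _ < 2 * k ^ 2 := hW)
    (fun v hv => hcap _ (fun hs => hv ((hmemS' v).2 hs)))
  obtain ⟨⟨hfC, hfadj⟩, hfS, hfF⟩ := hf'
  set f₁ : V → ℕ := fun v => if hv : v ∈ Af then f' ⟨v, Finset.mem_coe.mpr hv⟩ else 0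
    with hf₁def
  have hf₁ : ∀ (v : V) (hv : v ∈ Af), f₁ v = f' ⟨v, Finset.mem_coe.mpr hv⟩ := by
    intro v hv; simp [hf₁def, hv]
  have hzne : (C \ (F v₀ ∪ (Finset.univ.filter (fun u => G.Adj v₀ u)).image f₁)).Nonempty := by
    rw [← Finset.card_pos]
    have h1 := Finset.card_le_card_sdiff_add_card (s := C)
      (t := F v₀ ∪ (Finset.univ.filter (fun u => G.Adj v₀ u)).image f₁)
    have h2 := Finset.card_union_le (F v₀) ((Finset.univ.filter (fun u => G.Adj v₀ u)).image f₁)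
    have h3 : ((Finset.univ.filter (fun u => G.Adj v₀ u)).image f₁).card
        ≤ (Finset.univ.filter (fun u => G.Adj v₀ u)).card := Finset.card_image_le
    omega
  obtain ⟨z, hz⟩ := hzne
  rw [Finset.mem_sdiff, Finset.mem_union, not_or] at hz
  have hzC := hz.1
  have hzF := hz.2.1
  have hzN := hz.2.2
  refine ⟨fun v => if v = v₀ then z else f₁ v, ⟨⟨?_, ?_⟩, ?_, ?_⟩⟩
  · intro v
    simp only []
    by_cases hv : v = v₀
    · simpa [hv] using hzC
    · have hvAf := hmemAf v hv
      rw [if_neg hv, hf₁ v hvAf]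
      exact hfC _
  · intro u v huv
    simp only []
    by_cases hu : u = v₀
    · subst hu
      have hv : v ≠ u := (G.ne_of_adj huv).symm
      rw [if_pos rfl, if_neg hv]
      intro hcon
      apply hzN
      exact Finset.mem_image.mpr ⟨v, by simp [huv], hcon.symm⟩
    · by_cases hv : v = v₀
      · subst hv
        rw [if_neg hu, if_pos rfl]
        intro hcon
        apply hzN
        exact Finset.mem_image.mpr ⟨u, by simp [huv.symm], hcon⟩
      · have huAf := hmemAf u hu
        have hvAf := hmemAf v hv
        rw [if_neg hu, if_neg hv, hf₁ u huAf, hf₁ v hvAf]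
        exact hfadj ((hadj _ _).2 huv)
  · intro v hv
    simp only []
    have hvv₀ : v ≠ v₀ := fun hh => hv₀ (hh ▸ hv)
    have hvAf := hmemAf v hvv₀
    rw [if_neg hvv₀, hf₁ v hvAf]
    exact hfS _ ((hmemS' _).2 hv)
  · intro v hv
    simp only []
    by_cases hvv₀ : v = v₀
    · subst hvv₀
      rw [if_pos rfl]
      exact hzF
    · have hvAf := hmemAf v hvv₀
      rw [if_neg hvv₀, hf₁ v hvAf]
      exact hfF _ (fun hs => hv ((hmemS' _).1 hs))

open scoped Classical in
private lemma caseI (hk : 1 ≤ k) (hC : 3 * k - 1 ≤ C.card)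
    (h : MinInextensible k G C)
    (hc1 : ∀ v ∈ S, c v ∈ C)
    (hc2 : ∀ u ∈ S, ∀ v ∈ S, G.Adj u v → c u ≠ c v)
    (hF3 : ∀ v ∉ S, F v ⊆ C)
    (hW : k * S.card + ∑ v ∈ Sᶜ, (F v).card < 2 * k ^ 2)
    (hcap : ∀ v ∉ S, (F v).card ≤ k)
    (b₀ : V) (hb₀S : b₀ ∈ S)
    (hNb : ((Finset.univ.filter (fun u => G.Adj b₀ u)) \ S).card ≤ k) :
    ∃ f, Respects G C S c F f := by
  classical
  set nbrs : Finset V := Finset.univ.filter (fun u => G.Adj b₀ u) with hnbrsdef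
  have hnbrs : ∀ v, v ∈ nbrs ↔ G.Adj b₀ v := by intro v; simp [hnbrsdef]
  set fulls : Finset V := Sᶜ.filter (fun v => (F v).card = k) with hfullsdef
  -- |S| + |fulls| ≤ 2k - 1
  have hsf : S.card + fulls.card ≤ 2 * k - 1 := by
    have h1 : k * fulls.card ≤ ∑ v ∈ fulls, (F v).card := by
      calc k * fulls.card = fulls.card • k := by simp [Nat.mul_comm]
        _ ≤ ∑ v ∈ fulls, (F v).card := Finset.card_nsmul_le_sum fulls _ k
            (fun v hv => by rw [hfullsdef, Finset.mem_filter] at hv; omega)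
    have h2 : ∑ v ∈ fulls, (F v).card ≤ ∑ v ∈ Sᶜ, (F v).card :=
      Finset.sum_le_sum_of_subset (by rw [hfullsdef]; exact Finset.filter_subset _ _)
    have h3 : k * (S.card + fulls.card) < k * (2 * k) := by
      calc k * (S.card + fulls.card) = k * S.card + k * fulls.card := by ring
        _ ≤ k * S.card + ∑ v ∈ Sᶜ, (F v).card := by omega
        _ < 2 * k ^ 2 := hW
        _ = k * (2 * k) := by ring
    have := Nat.lt_of_mul_lt_mul_left h3
    omega
  set Y : Finset V := (nbrs \ S).filter (fun v => (F v).card = k) with hYdef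
  have hYmem : ∀ y, y ∈ Y ↔ (G.Adj b₀ y ∧ y ∉ S ∧ (F y).card = k) := by
    intro y
    simp only [hYdef, Finset.mem_filter, Finset.mem_sdiff, hnbrs]
    tauto
  have hYfulls : Y ⊆ fulls := by
    intro y hy
    rw [hYmem] at hy
    rw [hfullsdef, Finset.mem_filter, Finset.mem_compl]
    exact ⟨hy.2.1, hy.2.2⟩
  have hYcard : Y.card ≤ fulls.card := Finset.card_le_card hYfulls
  set L : V → Finset ℕ := fun x => C \ (F x ∪ S.image c) with hLdef
  have hL : ∀ x ∈ Y, Y.card ≤ (L x).card := by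
    intro x hx
    rw [hYmem] at hx
    have h1 := Finset.card_le_card_sdiff_add_card (s := C) (t := F x ∪ S.image c)
    have h2 := Finset.card_union_le (F x) (S.image c)
    have h3 : (S.image c).card ≤ S.card := Finset.card_image_le
    rw [hLdef]
    simp only []
    omega
  obtain ⟨g, hg1, hg2⟩ := greedy L Y hL
  have hgC : ∀ y ∈ Y, g y ∈ C := by
    intro y hy
    have := hg1 y hy
    rw [hLdef, Finset.mem_sdiff] at this
    exact this.1
  have hgF : ∀ y ∈ Y, g y ∉ F y := by
    intro y hy
    have := hg1 y hy
    rw [hLdef, Finset.mem_sdiff, Finset.mem_union] at this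
    exact fun hh => this.2 (Or.inl hh)
  have hgS : ∀ y ∈ Y, ∀ s ∈ S, g y ≠ c s := by
    intro y hy s hs
    have := hg1 y hy
    rw [hLdef, Finset.mem_sdiff, Finset.mem_union] at this
    exact fun hh => this.2 (Or.inr (Finset.mem_image.mpr ⟨s, hs, hh.symm⟩))
  set Af : Finset V := Finset.univ.erase b₀ with hAfdef
  have hAf : Af ≠ Finset.univ := by
    intro hh
    have : b₀ ∈ Af := hh ▸ Finset.mem_univ b₀
    simp [hAfdef] at this
  have hmemAf : ∀ v : V, v ≠ b₀ → v ∈ Af := by intro v hv; simp [hAfdef, hv]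
  set Sbig : Finset V := (S.erase b₀) ∪ Y with hSbigdef
  have hSbigmem : ∀ v, v ∈ Sbig ↔ ((v ∈ S ∧ v ≠ b₀) ∨ v ∈ Y) := by
    intro v
    simp only [hSbigdef, Finset.mem_union, Finset.mem_erase]
    tauto
  have hb₀Sbig : b₀ ∉ Sbig := by
    rw [hSbigmem]
    rintro (⟨-, hh⟩ | hh)
    · exact hh rfl
    · rw [hYmem] at hh
      exact hh.2.1 hb₀S
  set cbig : V → ℕ := fun v => if v ∈ Y then g v else c v with hcbigdef
  set Fbig : V → Finset ℕ :=
    fun v => if G.Adj b₀ v ∧ v ∉ S ∧ v ∉ Y then insert (c b₀) (F v) else F v with hFbigdef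
  have hFbigsub : ∀ v, F v ⊆ Fbig v := by
    intro v
    rw [hFbigdef]
    simp only []
    split
    · exact Finset.subset_insert _ _
    · exact Finset.Subset.refl _
  set S' : Finset ↥(↑Af : Set V) :=
    Finset.univ.filter (fun x : ↥(↑Af : Set V) => (x : V) ∈ Sbig) with hS'def
  have hmemS' : ∀ x : ↥(↑Af : Set V), x ∈ S' ↔ (x : V) ∈ Sbig := by
    intro x; simp [hS'def]
  have hadj : ∀ u v : ↥(↑Af : Set V),
      (SimpleGraph.induce (↑Af : Set V) G).Adj u v ↔ G.Adj ↑u ↑v := fun u v => Iff.rfl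
  have hcoene : ∀ x : ↥(↑Af : Set V), (x : V) ≠ b₀ := by
    intro x hh
    have hx : (x : V) ∈ Finset.univ.erase b₀ := x.2
    exact (Finset.mem_erase.mp hx).1 hh
  have hnotS : ∀ x : ↥(↑Af : Set V), x ∉ S' → (x : V) ∉ S ∧ (x : V) ∉ Y := by
    intro x hx
    rw [hmemS'] at hx
    constructor
    · intro hs
      exact hx ((hSbigmem _).mpr (Or.inl ⟨hs, hcoene x⟩))
    · intro hy
      exact hx ((hSbigmem _).mpr (Or.inr hy))
  have hext : ∃ f'', Respects (SimpleGraph.induce (↑Af : Set V) G) C S'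
      (fun x => cbig ↑x) (fun x => Fbig ↑x) f'' := by
    apply extend_of_min h Af hAf
    · -- colors of cbig in C
      intro v hv
      rw [hmemS', hSbigmem] at hv
      simp only [hcbigdef]
      by_cases hY : (v : V) ∈ Y
      · rw [if_pos hY]; exact hgC _ hY
      · rw [if_neg hY]
        rcases hv with ⟨hs, -⟩ | hy
        · exact hc1 _ hs
        · exact absurd hy hY
    · -- properness of cbig on S'
      intro u hu v hv hl
      have huv : G.Adj ↑u ↑v := (hadj u v).1 hl
      rw [hmemS', hSbigmem] at hu hv
      simp only [hcbigdef]
      by_cases huY : (u : V) ∈ Y <;> by_cases hvY : (v : V) ∈ Y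
      · rw [if_pos huY, if_pos hvY]
        exact hg2 _ huY _ hvY (fun hh => (G.ne_of_adj huv) (by exact_mod_cast hh))
      · rw [if_pos huY, if_neg hvY]
        rcases hv with ⟨hs, -⟩ | hy
        · exact hgS _ huY _ hs
        · exact absurd hy hvY
      · rw [if_neg huY, if_pos hvY]
        rcases hu with ⟨hs, -⟩ | hy
        · exact fun hh => (hgS _ hvY _ hs) hh.symm
        · exact absurd hy huY
      · rw [if_neg huY, if_neg hvY]
        rcases hu with ⟨hus, -⟩ | hy
        · rcases hv with ⟨hvs, -⟩ | hy
          · exact hc2 _ hus _ hvs huv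
          · exact absurd hy hvY
        · exact absurd hy huY
    · -- Fbig ⊆ C off S'
      intro v hv
      obtain ⟨hvS, hvY⟩ := hnotS v hv
      rw [hFbigdef]
      simp only []
      split
      · exact Finset.insert_subset (hc1 _ hb₀S) (hF3 _ hvS)
      · exact hF3 _ hvS
    · -- weight
      have hScard : 1 ≤ S.card := Finset.card_pos.mpr ⟨b₀, hb₀S⟩
      have t1 : S'.card ≤ (S.card - 1) + Y.card := by
        have h1 : S'.card ≤ Sbig.card :=
          card_coe_le Af S' Sbig (fun x hx => (hmemS' x).1 hx)
        have h2 : Sbig.card ≤ (S.erase b₀).card + Y.card := by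
          rw [hSbigdef]; exact Finset.card_union_le _ _
        rw [Finset.card_erase_of_mem hb₀S] at h2
        omega
      set D : Finset V := Af \ Sbig with hDdef
      have t2 : ∑ x ∈ S'ᶜ, (Fbig ↑x).card ≤ (∑ v ∈ D, (F v).card) + k := by
        have h1 : ∑ x ∈ S'ᶜ, (Fbig ↑x).card ≤ ∑ v ∈ D, (Fbig v).card := by
          apply sum_coe_le Af S'ᶜ (fun v => (Fbig v).card) D
          intro x hx
          rw [Finset.mem_compl] at hx
          rw [hDdef, Finset.mem_sdiff]
          refine ⟨Finset.mem_coe.mp x.2, ?_⟩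
          exact fun hh => hx ((hmemS' x).mpr hh)
        have h2 : ∑ v ∈ D, (Fbig v).card
            ≤ ∑ v ∈ D, ((F v).card + (if G.Adj b₀ v ∧ v ∉ S ∧ v ∉ Y then 1 else 0)) := by
          apply Finset.sum_le_sum
          intro v hv
          rw [hFbigdef]
          simp only []
          split
          · have := Finset.card_insert_le (c b₀) (F v)
            omega
          · omega
        have h3 : ∑ v ∈ D, ((F v).card + (if G.Adj b₀ v ∧ v ∉ S ∧ v ∉ Y then 1 else 0))
            = (∑ v ∈ D, (F v).card)
              + (D.filter (fun v => G.Adj b₀ v ∧ v ∉ S ∧ v ∉ Y)).card := by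
          rw [Finset.sum_add_distrib]
          congr 1
          exact_mod_cast Finset.sum_boole _ _
        have h4 : (D.filter (fun v => G.Adj b₀ v ∧ v ∉ S ∧ v ∉ Y)).card ≤ k := by
          refine le_trans (Finset.card_le_card ?_) hNb
          intro v hv
          rw [Finset.mem_filter] at hv
          rw [Finset.mem_sdiff, hnbrs]
          exact ⟨hv.2.1, hv.2.2.1⟩
        omega
      have t3 : (∑ v ∈ D, (F v).card) + k * Y.card ≤ ∑ v ∈ Sᶜ, (F v).card := by
        have hYsub : Y ⊆ Sᶜ := by
          intro y hy
          rw [Finset.mem_compl]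
          exact ((hYmem y).1 hy).2.1
        have h1 : ∑ v ∈ D, (F v).card ≤ ∑ v ∈ Sᶜ \ Y, (F v).card := by
          apply Finset.sum_le_sum_of_subset
          intro v hv
          rw [hDdef, Finset.mem_sdiff] at hv
          obtain ⟨hvAf, hvSbig⟩ := hv
          rw [hAfdef, Finset.mem_erase] at hvAf
          rw [Finset.mem_sdiff, Finset.mem_compl]
          constructor
          · intro hs
            exact hvSbig ((hSbigmem _).mpr (Or.inl ⟨hs, hvAf.1⟩))
          · intro hy
            exact hvSbig ((hSbigmem _).mpr (Or.inr hy))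
        have h2 : ∑ v ∈ Sᶜ \ Y, (F v).card + ∑ v ∈ Y, (F v).card = ∑ v ∈ Sᶜ, (F v).card :=
          Finset.sum_sdiff hYsub
        have h3 : ∑ v ∈ Y, (F v).card = k * Y.card := by
          rw [Finset.sum_congr rfl (fun y hy => ((hYmem y).1 hy).2.2)]
          simp [Nat.mul_comm]
        omega
      -- combine
      have t1' : k * S'.card ≤ k * ((S.card - 1) + Y.card) := Nat.mul_le_mul_left k t1
      have e1 : k * ((S.card - 1) + Y.card) + k = k * S.card + k * Y.card := by
        have ha : S.card - 1 + 1 = S.card := Nat.succ_pred_eq_of_pos hScard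
        calc k * ((S.card - 1) + Y.card) + k = k * ((S.card - 1) + 1) + k * Y.card := by ring
          _ = k * S.card + k * Y.card := by rw [ha]
      calc k * S'.card + ∑ x ∈ S'ᶜ, (Fbig ↑x).card
          ≤ k * ((S.card - 1) + Y.card) + ((∑ v ∈ D, (F v).card) + k) := Nat.add_le_add t1' t2
        _ = (k * ((S.card - 1) + Y.card) + k) + ∑ v ∈ D, (F v).card := by ring
        _ = (k * S.card + k * Y.card) + ∑ v ∈ D, (F v).card := by rw [e1]
        _ = k * S.card + ((∑ v ∈ D, (F v).card) + k * Y.card) := by ring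
        _ ≤ k * S.card + ∑ v ∈ Sᶜ, (F v).card := Nat.add_le_add_left t3 _
        _ < 2 * k ^ 2 := hW
    · -- cap
      intro v hv
      obtain ⟨hvS, hvY⟩ := hnotS v hv
      rw [hFbigdef]
      simp only []
      split
      · rename_i hcond
        have hne : (F (v : V)).card ≠ k := by
          intro hh
          exact hvY ((hYmem _).mpr ⟨hcond.1, hvS, hh⟩)
        have h1 := hcap _ hvS
        have h2 := Finset.card_insert_le (c b₀) (F (v : V))
        omega
      · exact hcap _ hvS
  obtain ⟨f', hf'⟩ := hext
  -- now build the coloring of G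
  obtain ⟨⟨hfC, hfadj⟩, hfS, hfF⟩ := hf'
  set f₁ : V → ℕ := fun v => if hv : v ∈ Af then f' ⟨v, Finset.mem_coe.mpr hv⟩ else 0
    with hf₁def
  have hf₁ : ∀ (v : V) (hv : v ∈ Af), f₁ v = f' ⟨v, Finset.mem_coe.mpr hv⟩ := by
    intro v hv; simp [hf₁def, hv]
  refine ⟨fun v => if v = b₀ then c b₀ else f₁ v, ⟨⟨?_, ?_⟩, ?_, ?_⟩⟩
  · intro v
    simp only []
    by_cases hv : v = b₀
    · rw [if_pos hv]; exact hc1 _ hb₀S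
    · rw [if_neg hv, hf₁ v (hmemAf v hv)]
      exact hfC _
  · intro u v huv
    simp only []
    by_cases hu : u = b₀
    · subst hu
      have hv : v ≠ u := (G.ne_of_adj huv).symm
      rw [if_pos rfl, if_neg hv, hf₁ v (hmemAf v hv)]
      by_cases hvS' : (⟨v, Finset.mem_coe.mpr (hmemAf v hv)⟩ : ↥(↑Af : Set V)) ∈ S'
      · have hvSbig := (hmemS' _).1 hvS'
        rw [hfS _ hvS']
        simp only [hcbigdef]
        by_cases hvY : v ∈ Y
        · rw [if_pos hvY]
          exact fun hh => (hgS _ hvY _ hb₀S) hh.symm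
        · rw [if_neg hvY]
          rcases (hSbigmem v).1 hvSbig with ⟨hs, -⟩ | hy
          · exact hc2 _ hb₀S _ hs huv
          · exact absurd hy hvY
      · have hfFv := hfF _ hvS'
        obtain ⟨hvS, hvY⟩ := hnotS _ hvS'
        simp only [hFbigdef] at hfFv
        rw [if_pos ⟨huv, hvS, hvY⟩] at hfFv
        intro hh
        exact hfFv (hh ▸ Finset.mem_insert_self _ _)
    · by_cases hv : v = b₀
      · subst hv
        rw [if_neg hu, if_pos rfl, hf₁ u (hmemAf u hu)]
        by_cases huS' : (⟨u, Finset.mem_coe.mpr (hmemAf u hu)⟩ : ↥(↑Af : Set V)) ∈ S'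
        · rw [hfS _ huS']
          simp only [hcbigdef]
          by_cases huY : u ∈ Y
          · rw [if_pos huY]
            exact hgS _ huY _ hb₀S
          · rw [if_neg huY]
            rcases (hSbigmem u).1 ((hmemS' _).1 huS') with ⟨hs, -⟩ | hy
            · exact hc2 _ hs _ hb₀S huv
            · exact absurd hy huY
        · have hfFu := hfF _ huS'
          obtain ⟨huS, huY⟩ := hnotS _ huS'
          simp only [hFbigdef] at hfFu
          rw [if_pos ⟨huv.symm, huS, huY⟩] at hfFu
          intro hh
          exact hfFu (hh ▸ Finset.mem_insert_self _ _)
      · rw [if_neg hu, if_neg hv, hf₁ u (hmemAf u hu), hf₁ v (hmemAf v hv)]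
        exact hfadj ((hadj _ _).2 huv)
  · intro v hv
    simp only []
    by_cases hvb : v = b₀
    · rw [if_pos hvb, hvb]
    · rw [if_neg hvb, hf₁ v (hmemAf v hvb)]
      have hvS' : (⟨v, Finset.mem_coe.mpr (hmemAf v hvb)⟩ : ↥(↑Af : Set V)) ∈ S' :=
        (hmemS' _).mpr ((hSbigmem v).mpr (Or.inl ⟨hv, hvb⟩))
      rw [hfS _ hvS']
      simp only [hcbigdef]
      have hvY : v ∉ Y := fun hy => ((hYmem v).1 hy).2.1 hv
      rw [if_neg hvY]
  · intro v hv
    simp only []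
    have hvb : v ≠ b₀ := fun hh => hv (hh ▸ hb₀S)
    rw [if_neg hvb, hf₁ v (hmemAf v hvb)]
    by_cases hvY : v ∈ Y
    · have hvS' : (⟨v, Finset.mem_coe.mpr (hmemAf v hvb)⟩ : ↥(↑Af : Set V)) ∈ S' :=
        (hmemS' _).mpr ((hSbigmem v).mpr (Or.inr hvY))
      rw [hfS _ hvS']
      simp only [hcbigdef]
      rw [if_pos hvY]
      exact hgF _ hvY
    · have hvS' : (⟨v, Finset.mem_coe.mpr (hmemAf v hvb)⟩ : ↥(↑Af : Set V)) ∉ S' := by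
        rw [hmemS', hSbigmem]
        rintro (⟨hs, -⟩ | hy)
        · exact hv hs
        · exact hvY hy
      have := hfF _ hvS'
      exact fun hh => this (hFbigsub v hh)

open scoped Classical in
private lemma caseII (h : MinInextensible k G C)
    (hc1 : ∀ v ∈ S, c v ∈ C)
    (hc2 : ∀ u ∈ S, ∀ v ∈ S, G.Adj u v → c u ≠ c v)
    (hF3 : ∀ v ∉ S, F v ⊆ C)
    (hW : k * S.card + ∑ v ∈ Sᶜ, (F v).card < 2 * k ^ 2)
    (hcap : ∀ v ∉ S, (F v).card ≤ k)
    (Af Xf Bf : Finset V)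
    (hcover : ∀ v : V, v ∈ Af ∨ v ∈ Xf ∨ v ∈ Bf)
    (hAB : ∀ a ∈ Af, a ∉ Bf)
    (hAX : ∀ a ∈ Af, a ∉ Xf)
    (hBX : ∀ b ∈ Bf, b ∉ Xf)
    (hsep : ∀ a ∈ Af, ∀ b ∈ Bf, ¬ G.Adj a b)
    (a₀ : V) (ha₀ : a₀ ∈ Af)
    (b₀ : V) (hb₀ : b₀ ∈ Bf) (hb₀S : b₀ ∉ S)
    (hwB : k * (Xf.card + (S ∩ Bf).card) + ∑ v ∈ Bf \ S, (F v).card < 2 * k ^ 2) :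
    ∃ f, Respects G C S c F f := by
  classical
  -- Step 1: color G[V ∖ (B ∖ S)]
  set A1 : Finset V := Finset.univ \ (Bf \ S) with hA1def
  have hmemA1 : ∀ v : V, v ∈ A1 ↔ ¬(v ∈ Bf ∧ v ∉ S) := by
    intro v
    simp only [hA1def, Finset.mem_sdiff, Finset.mem_univ, true_and]
  have hA1ne : A1 ≠ Finset.univ := by
    intro hh
    have : b₀ ∈ A1 := hh ▸ Finset.mem_univ b₀
    rw [hmemA1] at this
    exact this ⟨hb₀, hb₀S⟩
  have hAsubA1 : ∀ a ∈ Af, a ∈ A1 :=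
    fun a ha => (hmemA1 a).mpr (fun hh => hAB a ha hh.1)
  have hXsubA1 : ∀ x ∈ Xf, x ∈ A1 :=
    fun x hx => (hmemA1 x).mpr (fun hh => hBX x hh.1 hx)
  have hSsubA1 : ∀ s ∈ S, s ∈ A1 :=
    fun s hs => (hmemA1 s).mpr (fun hh => hh.2 hs)
  set S1 : Finset ↥(↑A1 : Set V) :=
    Finset.univ.filter (fun x : ↥(↑A1 : Set V) => (x : V) ∈ S) with hS1def
  have hmemS1 : ∀ x : ↥(↑A1 : Set V), x ∈ S1 ↔ (x : V) ∈ S := by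
    intro x; simp [hS1def]
  have hadj1 : ∀ u v : ↥(↑A1 : Set V),
      (SimpleGraph.induce (↑A1 : Set V) G).Adj u v ↔ G.Adj ↑u ↑v := fun u v => Iff.rfl
  have hext1 : ∃ f1, Respects (SimpleGraph.induce (↑A1 : Set V) G) C S1
      (fun x => c ↑x) (fun x => F ↑x) f1 := by
    apply extend_of_min h A1 hA1ne
    · exact fun v hv => hc1 _ ((hmemS1 v).1 hv)
    · exact fun u hu v hv hl =>
        hc2 _ ((hmemS1 u).1 hu) _ ((hmemS1 v).1 hv) ((hadj1 u v).1 hl)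
    · exact fun v hv => hF3 _ (fun hs => hv ((hmemS1 v).2 hs))
    · have t1 : S1.card ≤ S.card := card_coe_le A1 S1 S (fun x hx => (hmemS1 x).1 hx)
      have t2 : ∑ x ∈ S1ᶜ, (F ↑x).card ≤ ∑ v ∈ Sᶜ, (F v).card := by
        apply sum_coe_le A1 S1ᶜ (fun v => (F v).card) Sᶜ
        intro x hx
        rw [Finset.mem_compl] at hx ⊢
        exact fun hs => hx ((hmemS1 x).2 hs)
      calc k * S1.card + ∑ x ∈ S1ᶜ, (F ↑x).card
          ≤ k * S.card + ∑ v ∈ Sᶜ, (F v).card :=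
            Nat.add_le_add (Nat.mul_le_mul_left k t1) t2
        _ < 2 * k ^ 2 := hW
    · exact fun v hv => hcap _ (fun hs => hv ((hmemS1 v).2 hs))
  obtain ⟨f'1, ⟨hf1C', hf1adj'⟩, hf1S', hf1F'⟩ := hext1
  set f₁ : V → ℕ := fun v => if hv : v ∈ A1 then f'1 ⟨v, Finset.mem_coe.mpr hv⟩ else 0
    with hf₁def
  have hf₁ : ∀ (v : V) (hv : v ∈ A1), f₁ v = f'1 ⟨v, Finset.mem_coe.mpr hv⟩ := by
    intro v hv; simp [hf₁def, hv]
  have hf₁C : ∀ v ∈ A1, f₁ v ∈ C := by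
    intro v hv; rw [hf₁ v hv]; exact hf1C' _
  have hf₁adj : ∀ u v : V, u ∈ A1 → v ∈ A1 → G.Adj u v → f₁ u ≠ f₁ v := by
    intro u v hu hv huv
    rw [hf₁ u hu, hf₁ v hv]
    exact hf1adj' ((hadj1 _ _).2 huv)
  have hf₁S : ∀ v ∈ S, f₁ v = c v := by
    intro v hv
    rw [hf₁ v (hSsubA1 v hv)]
    exact hf1S' _ ((hmemS1 _).2 hv)
  have hf₁F : ∀ v ∈ A1, v ∉ S → f₁ v ∉ F v := by
    intro v hv hvS
    rw [hf₁ v hv]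
    exact hf1F' _ (fun hs => hvS ((hmemS1 _).1 hs))
  -- Step 2: color G[B ∪ X] with X ∪ (S ∩ B) precolored by f₁
  set A2 : Finset V := Bf ∪ Xf with hA2def
  have hmemA2 : ∀ v : V, v ∈ A2 ↔ (v ∈ Bf ∨ v ∈ Xf) := by
    intro v; simp [hA2def]
  have hA2ne : A2 ≠ Finset.univ := by
    intro hh
    have h0 : a₀ ∈ A2 := hh ▸ Finset.mem_univ a₀
    rcases (hmemA2 a₀).1 h0 with h1 | h1
    · exact hAB a₀ ha₀ h1
    · exact hAX a₀ ha₀ h1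
  set S2big : Finset V := Xf ∪ (S ∩ Bf) with hS2bigdef
  have hmemS2big : ∀ v : V, v ∈ S2big ↔ (v ∈ Xf ∨ (v ∈ S ∧ v ∈ Bf)) := by
    intro v; simp [hS2bigdef, Finset.mem_inter]
  have hS2bigA1 : ∀ v ∈ S2big, v ∈ A1 := by
    intro v hv
    rcases (hmemS2big v).1 hv with h1 | h1
    · exact hXsubA1 v h1
    · exact hSsubA1 v h1.1
  have hS2bigA2 : ∀ v ∈ S2big, v ∈ A2 := by
    intro v hv
    rw [hmemA2]
    rcases (hmemS2big v).1 hv with h1 | h1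
    · exact Or.inr h1
    · exact Or.inl h1.2
  set S2 : Finset ↥(↑A2 : Set V) :=
    Finset.univ.filter (fun x : ↥(↑A2 : Set V) => (x : V) ∈ S2big) with hS2def
  have hmemS2 : ∀ x : ↥(↑A2 : Set V), x ∈ S2 ↔ (x : V) ∈ S2big := by
    intro x; simp [hS2def]
  have hadj2 : ∀ u v : ↥(↑A2 : Set V),
      (SimpleGraph.induce (↑A2 : Set V) G).Adj u v ↔ G.Adj ↑u ↑v := fun u v => Iff.rfl
  have hnotS2 : ∀ x : ↥(↑A2 : Set V), x ∉ S2 → (x : V) ∈ Bf ∧ (x : V) ∉ S ∧ (x : V) ∉ Xf := by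
    intro x hx
    rw [hmemS2] at hx
    have hxA2 : (x : V) ∈ Bf ∨ (x : V) ∈ Xf := (hmemA2 _).1 (Finset.mem_coe.mp x.2)
    have hxXf : (x : V) ∉ Xf := by
      intro hh
      exact hx ((hmemS2big _).2 (Or.inl hh))
    have hxBf : (x : V) ∈ Bf := hxA2.resolve_right hxXf
    refine ⟨hxBf, ?_, hxXf⟩
    intro hs
    exact hx ((hmemS2big _).2 (Or.inr ⟨hs, hxBf⟩))
  have hext2 : ∃ f2, Respects (SimpleGraph.induce (↑A2 : Set V) G) C S2
      (fun x => f₁ ↑x) (fun x => F ↑x) f2 := by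
    apply extend_of_min h A2 hA2ne
    · exact fun v hv => hf₁C _ (hS2bigA1 _ ((hmemS2 v).1 hv))
    · exact fun u hu v hv hl => hf₁adj _ _ (hS2bigA1 _ ((hmemS2 u).1 hu))
        (hS2bigA1 _ ((hmemS2 v).1 hv)) ((hadj2 u v).1 hl)
    · exact fun v hv => hF3 _ (hnotS2 v hv).2.1
    · have t1 : S2.card ≤ Xf.card + (S ∩ Bf).card := by
        refine le_trans (card_coe_le A2 S2 S2big (fun x hx => (hmemS2 x).1 hx)) ?_
        exact Finset.card_union_le Xf (S ∩ Bf)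
      have t2 : ∑ x ∈ S2ᶜ, (F ↑x).card ≤ ∑ v ∈ Bf \ S, (F v).card := by
        apply sum_coe_le A2 S2ᶜ (fun v => (F v).card) (Bf \ S)
        intro x hx
        rw [Finset.mem_compl] at hx
        have := hnotS2 x hx
        rw [Finset.mem_sdiff]
        exact ⟨this.1, this.2.1⟩
      calc k * S2.card + ∑ x ∈ S2ᶜ, (F ↑x).card
          ≤ k * (Xf.card + (S ∩ Bf).card) + ∑ v ∈ Bf \ S, (F v).card :=
            Nat.add_le_add (Nat.mul_le_mul_left k t1) t2
        _ < 2 * k ^ 2 := hwB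
    · exact fun v hv => hcap _ (hnotS2 v hv).2.1
  obtain ⟨f'2, ⟨hf2C', hf2adj'⟩, hf2S', hf2F'⟩ := hext2
  set f₂ : V → ℕ := fun v => if hv : v ∈ A2 then f'2 ⟨v, Finset.mem_coe.mpr hv⟩ else 0
    with hf₂def
  have hf₂ : ∀ (v : V) (hv : v ∈ A2), f₂ v = f'2 ⟨v, Finset.mem_coe.mpr hv⟩ := by
    intro v hv; simp [hf₂def, hv]
  have hf₂C : ∀ v ∈ A2, f₂ v ∈ C := by
    intro v hv; rw [hf₂ v hv]; exact hf2C' _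
  have hf₂adj : ∀ u v : V, u ∈ A2 → v ∈ A2 → G.Adj u v → f₂ u ≠ f₂ v := by
    intro u v hu hv huv
    rw [hf₂ u hu, hf₂ v hv]
    exact hf2adj' ((hadj2 _ _).2 huv)
  have hf₂S : ∀ v ∈ S2big, f₂ v = f₁ v := by
    intro v hv
    rw [hf₂ v (hS2bigA2 v hv)]
    exact hf2S' _ ((hmemS2 _).2 hv)
  have hf₂F : ∀ v ∈ A2, v ∉ S2big → f₂ v ∉ F v := by
    intro v hv hvS
    rw [hf₂ v hv]
    exact hf2F' _ (fun hs => hvS ((hmemS2 _).1 hs))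
  -- glue
  have hnotA2 : ∀ v : V, v ∉ A2 → v ∈ Af ∧ v ∈ A1 := by
    intro v hv
    rw [hmemA2] at hv
    push_neg at hv
    rcases hcover v with h1 | h1 | h1
    · exact ⟨h1, hAsubA1 v h1⟩
    · exact absurd h1 hv.2
    · exact absurd h1 hv.1
  have hXfS2big : ∀ x ∈ Xf, x ∈ S2big :=
    fun x hx => (hmemS2big x).2 (Or.inl hx)
  refine ⟨fun v => if v ∈ A2 then f₂ v else f₁ v, ⟨⟨?_, ?_⟩, ?_, ?_⟩⟩
  · intro v
    simp only []
    by_cases hv : v ∈ A2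
    · rw [if_pos hv]; exact hf₂C v hv
    · rw [if_neg hv]; exact hf₁C v (hnotA2 v hv).2
  · intro u v huv
    simp only []
    by_cases hu : u ∈ A2 <;> by_cases hv : v ∈ A2
    · rw [if_pos hu, if_pos hv]
      exact hf₂adj u v hu hv huv
    · -- u ∈ A2, v ∉ A2 : v ∈ Af, u ∈ Xf (else contradiction with hsep)
      rw [if_pos hu, if_neg hv]
      obtain ⟨hvAf, hvA1⟩ := hnotA2 v hv
      have huXf : u ∈ Xf := by
        rcases (hmemA2 u).1 hu with h1 | h1
        · exact absurd huv.symm (hsep v hvAf u h1)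
        · exact h1
      rw [hf₂S u (hXfS2big u huXf)]
      exact hf₁adj u v (hXsubA1 u huXf) hvA1 huv
    · rw [if_neg hu, if_pos hv]
      obtain ⟨huAf, huA1⟩ := hnotA2 u hu
      have hvXf : v ∈ Xf := by
        rcases (hmemA2 v).1 hv with h1 | h1
        · exact absurd huv (hsep u huAf v h1)
        · exact h1
      rw [hf₂S v (hXfS2big v hvXf)]
      exact hf₁adj u v huA1 (hXsubA1 v hvXf) huv
    · rw [if_neg hu, if_neg hv]
      exact hf₁adj u v (hnotA2 u hu).2 (hnotA2 v hv).2 huv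
  · intro v hv
    simp only []
    by_cases hvA2 : v ∈ A2
    · rw [if_pos hvA2]
      have hvS2big : v ∈ S2big := by
        rw [hmemS2big]
        rcases (hmemA2 v).1 hvA2 with h1 | h1
        · exact Or.inr ⟨hv, h1⟩
        · exact Or.inl h1
      rw [hf₂S v hvS2big]
      exact hf₁S v hv
    · rw [if_neg hvA2]
      exact hf₁S v hv
  · intro v hv
    simp only []
    by_cases hvA2 : v ∈ A2
    · rw [if_pos hvA2]
      by_cases hvXf : v ∈ Xf
      · rw [hf₂S v (hXfS2big v hvXf)]
        exact hf₁F v (hXsubA1 v hvXf) hv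
      · have hvBf : v ∈ Bf := ((hmemA2 v).1 hvA2).resolve_right hvXf
        apply hf₂F v hvA2
        rw [hmemS2big]
        rintro (h1 | h1)
        · exact hvXf h1
        · exact hv h1.1
    · rw [if_neg hvA2]
      exact hf₁F v (hnotA2 v hvA2).2 hv

private lemma part1 (hk : 1 ≤ k) (hC : 3 * k - 1 ≤ C.card)
    (h : MinInextensible k G C)
    (hc1 : ∀ v ∈ S, c v ∈ C)
    (hc2 : ∀ u ∈ S, ∀ v ∈ S, G.Adj u v → c u ≠ c v)
    (hF3 : ∀ v ∉ S, F v ⊆ C)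
    (hW : k * S.card + ∑ v ∈ Sᶜ, (F v).card < 2 * k ^ 2)
    (hcap : ∀ v ∉ S, (F v).card ≤ k)
    (hno : ¬ ∃ f, Respects G C S c F f) :
    C.card - k + 1 < Fintype.card V := by
  classical
  by_contra hle
  push_neg at hle
  by_cases hSu : ∀ v, v ∈ S
  · exact hno ⟨c, ⟨fun v => hc1 v (hSu v), fun u v huv => hc2 u (hSu u) v (hSu v) huv⟩,
      fun v _ => rfl, fun v hv => absurd (hSu v) hv⟩
  push_neg at hSu
  obtain ⟨v₀, hv₀⟩ := hSu
  have hdeg : ∀ v ∉ S, C.card ≤ (F v).card + (Finset.univ.filter (fun u => G.Adj v u)).card := by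
    intro v hv
    by_contra hlt
    push_neg at hlt
    exact hno (E1 h hc1 hc2 hF3 hW hcap v hv hlt)
  have hdegle : ∀ v : V, (Finset.univ.filter (fun u => G.Adj v u)).card + 1 ≤ Fintype.card V := by
    intro v
    have hsub : Finset.univ.filter (fun u => G.Adj v u) ⊆ Finset.univ.erase v := by
      intro u hu
      rw [Finset.mem_filter] at hu
      exact Finset.mem_erase.mpr ⟨(G.ne_of_adj hu.2).symm, Finset.mem_univ u⟩
    have := Finset.card_le_card hsub
    rw [Finset.card_erase_of_mem (Finset.mem_univ v), Finset.card_univ] at this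
    have hpos : 0 < Fintype.card V := Fintype.card_pos_iff.mpr ⟨v⟩
    omega
  have hFk : ∀ v ∉ S, k ≤ (F v).card := by
    intro v hv
    have h1 := hdeg v hv
    have h2 := hdegle v
    omega
  have hsum : k * Sᶜ.card ≤ ∑ v ∈ Sᶜ, (F v).card := by
    calc k * Sᶜ.card = Sᶜ.card * k := Nat.mul_comm _ _
      _ = Sᶜ.card • k := by simp
      _ ≤ ∑ v ∈ Sᶜ, (F v).card :=
          Finset.card_nsmul_le_sum Sᶜ _ k (fun v hv => hFk v (Finset.mem_compl.mp hv))
  have hNlt : Fintype.card V < 2 * k := by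
    have h1 : k * (S.card + Sᶜ.card) < 2 * k ^ 2 := by
      rw [Nat.mul_add]
      omega
    rw [Finset.card_add_card_compl] at h1
    have h2 : k * Fintype.card V < k * (2 * k) := by
      calc k * Fintype.card V < 2 * k ^ 2 := h1
        _ = k * (2 * k) := by ring
    exact Nat.lt_of_mul_lt_mul_left h2
  have h1 := hdeg v₀ hv₀
  have h2 := hcap v₀ hv₀
  have h3 := hdegle v₀
  omega

end Main


/-- If `|C| ≥ 3k − 1`, then every minimally `C`-inextensible graph has more than
`|C| − k + 1` vertices and is `(k+1)`-connected. -/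
theorem minInextensible_connected [Fintype V] [DecidableEq V] (k : ℕ) (hk : 1 ≤ k)
    (G : SimpleGraph V) (C : Finset ℕ) (hC : 3 * k - 1 ≤ C.card)
    (h : MinInextensible k G C) :
    C.card - k + 1 < Nat.card V ∧ KConnected G (k + 1) := by
  classical
  obtain ⟨S, c, F, hc1, hc2, hF3, hW, hcap, hno⟩ := h.1
  have hpart1 : C.card - k + 1 < Fintype.card V := part1 hk hC h hc1 hc2 hF3 hW hcap hno
  have hNat : Nat.card V = Fintype.card V := Nat.card_eq_fintype_card
  refine ⟨by rw [hNat]; exact hpart1, by rw [hNat]; omega, ?_⟩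
  intro X hX hex
  obtain ⟨A, B, hAne, hBne, hdisj, hunion, hsep⟩ := hex
  set Af : Finset V := Finset.univ.filter (fun v => v ∈ A) with hAfdef
  set Bf : Finset V := Finset.univ.filter (fun v => v ∈ B) with hBfdef
  set Xf : Finset V := Finset.univ.filter (fun v => v ∈ X) with hXfdef
  have hmA : ∀ v, v ∈ Af ↔ v ∈ A := by intro v; simp [hAfdef]
  have hmB : ∀ v, v ∈ Bf ↔ v ∈ B := by intro v; simp [hBfdef]
  have hmX : ∀ v, v ∈ Xf ↔ v ∈ X := by intro v; simp [hXfdef]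
  have hXset : (Xf : Set V) = X := by ext v; simp [hmX v]
  have hXk : Xf.card ≤ k := by
    have h1 : X.ncard = Xf.card := by rw [← hXset, Set.ncard_coe_finset]
    omega
  have hnX : ∀ v, v ∈ A ∨ v ∈ B → v ∉ X := by
    intro v hv hvX
    have : v ∈ Xᶜ := hunion ▸ (Set.mem_union v A B).mpr hv
    exact this hvX
  have hcover : ∀ v : V, v ∈ Af ∨ v ∈ Xf ∨ v ∈ Bf := by
    intro v
    by_cases hvX : v ∈ X
    · exact Or.inr (Or.inl ((hmX v).mpr hvX))
    · have : v ∈ A ∪ B := hunion.symm ▸ hvX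
      rcases this with h1 | h1
      · exact Or.inl ((hmA v).mpr h1)
      · exact Or.inr (Or.inr ((hmB v).mpr h1))
  have hAB : ∀ a ∈ Af, a ∉ Bf := by
    intro a ha hb
    exact (Set.disjoint_left.mp hdisj ((hmA a).mp ha)) ((hmB a).mp hb)
  have hAX : ∀ a ∈ Af, a ∉ Xf := by
    intro a ha hx
    exact hnX a (Or.inl ((hmA a).mp ha)) ((hmX a).mp hx)
  have hBX : ∀ b ∈ Bf, b ∉ Xf := by
    intro b hb hx
    exact hnX b (Or.inr ((hmB b).mp hb)) ((hmX b).mp hx)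
  have hsepf : ∀ a ∈ Af, ∀ b ∈ Bf, ¬ G.Adj a b := by
    intro a ha b hb
    exact hsep a ((hmA a).mp ha) b ((hmB b).mp hb)
  obtain ⟨a₀, ha₀A⟩ := hAne
  obtain ⟨b₀, hb₀B⟩ := hBne
  have ha₀ : a₀ ∈ Af := (hmA a₀).mpr ha₀A
  have hb₀ : b₀ ∈ Bf := (hmB b₀).mpr hb₀B
  -- helper for the "side inside S" cases
  have hcaseI : ∀ v₀ ∈ S, (∀ u, G.Adj v₀ u → u ∉ S → u ∈ Xf) → False := by
    intro v₀ hv₀S hnb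
    apply hno
    apply caseI hk hC h hc1 hc2 hF3 hW hcap v₀ hv₀S
    refine le_trans (le_trans (Finset.card_le_card ?_) (Finset.card_le_card (Finset.Subset.refl Xf))) hXk
    intro u hu
    rw [Finset.mem_sdiff, Finset.mem_filter] at hu
    exact hnb u hu.1.2 hu.2
  by_cases hBS : ∃ b ∈ Bf, b ∉ S
  · by_cases hAS : ∃ a ∈ Af, a ∉ S
    · obtain ⟨b₁, hb₁, hb₁S⟩ := hBS
      obtain ⟨a₁, ha₁, ha₁S⟩ := hAS
      set wA : ℕ := k * (S ∩ Af).card + ∑ v ∈ Af \ S, (F v).card with hwAdef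
      set wB : ℕ := k * (S ∩ Bf).card + ∑ v ∈ Bf \ S, (F v).card with hwBdef
      have hdSAB : Disjoint (S ∩ Af) (S ∩ Bf) := by
        rw [Finset.disjoint_left]
        intro v hv hv'
        exact hAB v (Finset.mem_inter.mp hv).2 (Finset.mem_inter.mp hv').2
      have hdFAB : Disjoint (Af \ S) (Bf \ S) := by
        rw [Finset.disjoint_left]
        intro v hv hv'
        exact hAB v (Finset.mem_sdiff.mp hv).1 (Finset.mem_sdiff.mp hv').1
      have hsum : wA + wB ≤ k * S.card + ∑ v ∈ Sᶜ, (F v).card := by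
        have h1 : (S ∩ Af).card + (S ∩ Bf).card ≤ S.card := by
          rw [← Finset.card_union_of_disjoint hdSAB]
          apply Finset.card_le_card
          intro v hv
          rcases Finset.mem_union.mp hv with h2 | h2
          · exact (Finset.mem_inter.mp h2).1
          · exact (Finset.mem_inter.mp h2).1
        have h2 : (∑ v ∈ Af \ S, (F v).card) + (∑ v ∈ Bf \ S, (F v).card)
            ≤ ∑ v ∈ Sᶜ, (F v).card := by
          rw [← Finset.sum_union hdFAB]
          apply Finset.sum_le_sum_of_subset
          intro v hv
          rw [Finset.mem_compl]
          rcases Finset.mem_union.mp hv with h3 | h3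
          · exact (Finset.mem_sdiff.mp h3).2
          · exact (Finset.mem_sdiff.mp h3).2
        have h3 : k * ((S ∩ Af).card + (S ∩ Bf).card) ≤ k * S.card :=
          Nat.mul_le_mul_left k h1
        rw [Nat.mul_add] at h3
        omega
      have hk2 : k * k = k ^ 2 := by ring
      rcases le_total wB wA with hle | hle
      · -- B is the light side
        have hwBlt : wB < k ^ 2 := by
          apply Nat.lt_of_mul_lt_mul_left (a := 2)
          calc 2 * wB = wB + wB := by ring
            _ ≤ wA + wB := by omega
            _ < 2 * k ^ 2 := lt_of_le_of_lt hsum hW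
        apply hno
        apply caseII h hc1 hc2 hF3 hW hcap Af Xf Bf hcover hAB hAX hBX hsepf
          a₀ ha₀ b₁ hb₁ hb₁S
        calc k * (Xf.card + (S ∩ Bf).card) + ∑ v ∈ Bf \ S, (F v).card
            = k * Xf.card + wB := by rw [hwBdef]; ring
          _ ≤ k * k + wB := by
              have := Nat.mul_le_mul_left k hXk
              omega
          _ < k ^ 2 + k ^ 2 := by omega
          _ = 2 * k ^ 2 := by ring
      · -- A is the light side; swap roles
        have hwAlt : wA < k ^ 2 := by
          apply Nat.lt_of_mul_lt_mul_left (a := 2)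
          calc 2 * wA = wA + wA := by ring
            _ ≤ wA + wB := by omega
            _ < 2 * k ^ 2 := lt_of_le_of_lt hsum hW
        apply hno
        apply caseII h hc1 hc2 hF3 hW hcap Bf Xf Af
          (fun v => by rcases hcover v with h1 | h1 | h1 <;> tauto)
          (fun b hb ha => hAB _ ha hb)
          hBX hAX
          (fun b hb a ha hadj => hsepf a ha b hb hadj.symm)
          b₀ hb₀ a₁ ha₁ ha₁S
        calc k * (Xf.card + (S ∩ Af).card) + ∑ v ∈ Af \ S, (F v).card
            = k * Xf.card + wA := by rw [hwAdef]; ring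
          _ ≤ k * k + wA := by
              have := Nat.mul_le_mul_left k hXk
              omega
          _ < k ^ 2 + k ^ 2 := by omega
          _ = 2 * k ^ 2 := by ring
    · -- A ⊆ S : delete a vertex of A
      push_neg at hAS
      apply hcaseI a₀ (hAS a₀ ha₀)
      intro u hadj huS
      rcases hcover u with h1 | h1 | h1
      · exact absurd (hAS u h1) huS
      · exact h1
      · exact absurd hadj (hsepf a₀ ha₀ u h1)
  · -- B ⊆ S : delete a vertex of B
    push_neg at hBS
    apply hcaseI b₀ (hBS b₀ hb₀)
    intro u hadj huS
    rcases hcover u with h1 | h1 | h1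
    · exact absurd hadj.symm (hsepf u h1 b₀ hb₀)
    · exact h1
    · exact absurd (hBS u h1) huS
end

section
/- For every integer k ≥ 1 and every set C of at least 2k − 1 colors, there exists a C-inextensible graph G with χ(G) = |C| − 2k + 3. Concretely, let m = |C| − 2k + 4, let H be the join of a stable set S of size 2k−1 with a complete graph K on m − 2 vertices; then χ(H) = m − 1 = |C| − 2k + 3, and the template precoloring the 2k−1 vertices of S with pairwise distinct colors (and empty forbidden lists on K) witnesses the C-inextensibility of H. -/
open Finset

variable {V : Type*}

open Function

/-!
Take `|C| + 1` vertices, a stable set `S` of size `2k − 1` and a clique on the rest, every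
clique vertex adjacent to all of `S`. Precolor `S` injectively and forbid nothing: a proper
coloring extending this is then injective on all `|C| + 1` vertices, which is impossible,
while the cost is `k(2k − 1) < 2k²`. A clique of size `|Sᶜ| + 1` and the obvious coloring give
`χ = |C| + 3 − 2k`.
-/

lemma Finset.exists_injOn_mapsTo_of_card_le {α β : Type*} [Nonempty β] {s : Finset α}
    {t : Finset β} (h : #s ≤ #t) : ∃ f : α → β, Set.InjOn f s ∧ Set.MapsTo f s t := by
  classical
  obtain ⟨e⟩ := Function.Embedding.nonempty_of_card_le (α := s) (β := t) (by simpa using h)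
  refine ⟨fun a ↦ if ha : a ∈ s then e ⟨a, ha⟩ else Classical.arbitrary β, ?_, ?_⟩
  · intro a ha b hb hab
    rw [mem_coe] at ha hb
    simpa [dif_pos ha, dif_pos hb, Subtype.val_inj] using hab
  · intro a ha
    simp [dif_pos (mem_coe.1 ha)]

def joinStableClique (S : Finset V) : SimpleGraph V where
  Adj u v := u ≠ v ∧ (u ∉ S ∨ v ∉ S)
  symm := ⟨fun _ _ h ↦ ⟨h.1.symm, h.2.symm⟩⟩
  loopless := ⟨fun _ h ↦ h.1 rfl⟩

namespace joinStableClique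

variable {S : Finset V}

lemma injective_of_properColoring {C : Finset ℕ} {f : V → ℕ}
    (hf : ProperColoring (joinStableClique S) C f) (hS : Set.InjOn f S) : Injective f := by
  intro u v huv
  by_contra hne
  by_cases hu : u ∈ S <;> by_cases hv : v ∈ S
  · exact hne (hS hu hv huv)
  all_goals exact hf.2 ⟨hne, by tauto⟩ huv

variable [Fintype V]

lemma not_exists_respects {C : Finset ℕ} {c : V → ℕ} (F : V → Finset ℕ)
    (hc : Set.InjOn c S) (hV : #C < Fintype.card V) :
    ¬ ∃ f, Respects (joinStableClique S) C S c F f := by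
  rintro ⟨f, hf, hfS, -⟩
  have hinj : Injective f := injective_of_properColoring hf
    fun u hu v hv huv ↦ hc hu hv (by rwa [← hfS u hu, ← hfS v hv])
  exact hV.not_ge (card_le_card_of_injOn f (fun v _ ↦ hf.1 v) hinj.injOn)

variable [DecidableEq V]

lemma isClique_insert_compl (a : V) : (joinStableClique S).IsClique ↑(insert a Sᶜ) := by
  intro u hu v hv huv
  simp only [coe_insert, coe_compl, Set.mem_insert_iff, Set.mem_compl_iff, mem_coe] at hu hv
  refine ⟨huv, ?_⟩
  rcases hu with rfl | hu <;> rcases hv with rfl | hv <;> tauto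

lemma colorable : (joinStableClique S).Colorable (#Sᶜ + 1) := by
  let f : V → Option ↥Sᶜ := fun v ↦ if h : v ∈ S then none else some ⟨v, mem_compl.2 h⟩
  have hf : ∀ ⦃u v⦄, (joinStableClique S).Adj u v → f u ≠ f v := by
    rintro u v ⟨huv, huS | hvS⟩ <;> by_cases hu : u ∈ S <;> by_cases hv : v ∈ S <;>
      simp_all [f]
  simpa [card_compl] using (SimpleGraph.Coloring.mk f fun h ↦ hf h).colorable

lemma chromaticNumber_eq {a : V} (ha : a ∈ S) :
    (joinStableClique S).chromaticNumber = (#Sᶜ + 1 : ℕ) := by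
  refine le_antisymm colorable.chromaticNumber_le ?_
  have hcard : #(insert a Sᶜ) = #Sᶜ + 1 := card_insert_of_notMem (by simpa using ha)
  simpa [hcard] using (isClique_insert_compl (S := S) a).card_le_chromaticNumber

lemma witnesses {k : ℕ} (hk : 1 ≤ k) {C : Finset ℕ} {c : V → ℕ} (hS : #S = 2 * k - 1)
    (hcC : Set.MapsTo c S C) (hc : Set.InjOn c S) (hV : #C < Fintype.card V) :
    Witnesses k (joinStableClique S) C S c fun _ ↦ ∅ := by
  refine ⟨hcC, fun u hu v hv huv ↦ hc.ne hu hv huv.1, fun _ _ ↦ empty_subset C,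
    ?_, fun _ _ ↦ by simp, not_exists_respects _ hc hV⟩
  simp only [card_empty, sum_const_zero, add_zero, hS]
  calc k * (2 * k - 1) < k * (2 * k) := Nat.mul_lt_mul_of_pos_left (by omega) hk
    _ = 2 * k ^ 2 := by ring

end joinStableClique

/-- For every `k ≥ 1` and every color set `C` with `|C| ≥ 2k − 1`, there exists a
`C`-inextensible graph `G` with `χ(G) = |C| − 2k + 3` (stated without truncated
subtraction as `χ(G) + 2k = |C| + 3`). -/
theorem inextensible_chromatic_optimal (k : ℕ) (hk : 1 ≤ k) (C : Finset ℕ)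
    (hC : 2 * k - 1 ≤ C.card) :
    ∃ (n : ℕ) (G : SimpleGraph (Fin n)),
      Inextensible k G C ∧
        G.chromaticNumber + ((2 * k : ℕ) : ℕ∞) = ((C.card : ℕ∞)) + 3 := by
  obtain ⟨S, -, hS⟩ := exists_subset_card_eq (s := (univ : Finset (Fin (#C + 1))))
    (n := 2 * k - 1) (by simp only [card_univ, Fintype.card_fin]; omega)
  obtain ⟨a, ha⟩ : S.Nonempty := card_pos.1 (by omega)
  obtain ⟨c, hc, hcC⟩ := exists_injOn_mapsTo_of_card_le (t := C) (by omega : #S ≤ #C)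
  refine ⟨#C + 1, joinStableClique S,
    ⟨S, c, _, joinStableClique.witnesses hk hS hcC hc (by simp)⟩, ?_⟩
  have hSc : #Sᶜ + 1 + 2 * k = #C + 3 := by
    rw [card_compl, Fintype.card_fin]; omega
  rw [joinStableClique.chromaticNumber_eq ha, ← Nat.cast_add, hSc]
  push_cast
  rfl
end

section
/- Let k ≥ 1 be an integer and w a weight function assigning to each vertex of a finite set P an integer in {0, 1, …, k−1}. Then P admits an increasing critical fit sequence: a partition of P into nonempty sets Q_1, …, Q_n with w(Q_j) := Σ_{v∈Q_j} w(v) satisfying 0 ≤ w(Q_1) ≤ … ≤ w(Q_n) < k and such that no two consecutive terms Q_j, Q_{j+1} are both non-jumps (where Q_j is a non-jump if ⌊w(Q_1∪…∪Q_j)/k⌋ = ⌊w(Q_1∪…∪Q_{j−1})/k⌋, and a jump otherwise). -/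
open Finset

/-- The weight of the union of the first `m` terms of the sequence `Q`. -/
def partialW {V : Type*} (w : V → ℕ) {n : ℕ} (Q : Fin n → Finset V) (m : ℕ) : ℕ :=
  ∑ i ∈ Finset.univ.filter (fun i : Fin n => (i : ℕ) < m), ∑ v ∈ Q i, w v

/-- The `j`-th term (`1 ≤ j ≤ n`) is a non-jump: the floor of the partial weight
divided by `k` does not increase at step `j`. -/
def NonJump {V : Type*} (k : ℕ) (w : V → ℕ) {n : ℕ} (Q : Fin n → Finset V)
    (j : ℕ) : Prop :=
  partialW w Q j / k = partialW w Q (j - 1) / k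

/-- A fit partition: nonempty parts, pairwise disjoint, covering `P`, each of weight `< k`. -/
def IsFitP {V : Type*} [DecidableEq V] (k : ℕ) (w : V → ℕ) (P : Finset V) (n : ℕ)
    (Q : Fin n → Finset V) : Prop :=
  (∀ i, (Q i).Nonempty) ∧ (∀ i j, i ≠ j → Disjoint (Q i) (Q j)) ∧
  Finset.univ.biUnion Q = P ∧ (∀ i, ∑ v ∈ Q i, w v < k)

lemma partialW_succ {V : Type*} (w : V → ℕ) {n : ℕ} (Q : Fin n → Finset V) {m : ℕ}
    (hm : m < n) :
    partialW w Q (m + 1) = partialW w Q m + ∑ v ∈ Q ⟨m, hm⟩, w v := by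
  unfold partialW
  have h : (Finset.univ.filter fun i : Fin n => (i : ℕ) < m + 1)
      = insert ⟨m, hm⟩ (Finset.univ.filter fun i : Fin n => (i : ℕ) < m) := by
    ext i
    simp only [mem_filter, mem_univ, true_and, mem_insert, Fin.ext_iff]
    omega
  rw [h, Finset.sum_insert (by simp), add_comm]

/-- Singleton fit partition exists. -/
lemma exists_fitP {V : Type*} [DecidableEq V] (k : ℕ) (P : Finset V) (w : V → ℕ)
    (hw : ∀ v ∈ P, w v < k) : ∃ n : ℕ, ∃ Q : Fin n → Finset V, IsFitP k w P n Q := by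
  refine ⟨P.card, fun i => {(P.equivFin.symm i : V)}, fun i => ⟨_, mem_singleton_self _⟩,
    ?_, ?_, ?_⟩
  · intro i j hij
    rw [Finset.disjoint_singleton]
    intro h
    exact hij (P.equivFin.symm.injective (Subtype.ext h))
  · ext v
    simp only [mem_biUnion, mem_univ, true_and, mem_singleton]
    constructor
    · rintro ⟨i, rfl⟩; exact (P.equivFin.symm i).2
    · intro hv; exact ⟨P.equivFin ⟨v, hv⟩, by simp⟩
  · intro i
    rw [Finset.sum_singleton]
    exact hw _ (P.equivFin.symm i).2

/-- Merging two consecutive parts whose total weight is `< k`. -/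
lemma merge_fitP {V : Type*} [DecidableEq V] {k : ℕ} {w : V → ℕ} {P : Finset V} {n : ℕ}
    {Q : Fin n → Finset V} (hfit : IsFitP k w P n Q) {a : ℕ} (ha : a + 2 ≤ n)
    (hsum : ∑ v ∈ Q ⟨a, by omega⟩, w v + ∑ v ∈ Q ⟨a + 1, by omega⟩, w v < k) :
    ∃ Q' : Fin (n - 1) → Finset V, IsFitP k w P (n - 1) Q' := by
  obtain ⟨hne, hdisj, huni, hwt⟩ := hfit
  set s : Fin (n - 1) → Finset (Fin n) := fun i =>
    if (i : ℕ) < a then {⟨i, Nat.lt_of_lt_of_le i.2 (Nat.sub_le n 1)⟩}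
    else if (i : ℕ) = a then {⟨a, by omega⟩, ⟨a + 1, by omega⟩}
    else {⟨(i : ℕ) + 1, Nat.add_lt_of_lt_sub i.2⟩} with hs
  have hmem : ∀ (i : Fin (n - 1)) (t : Fin n), t ∈ s i ↔
      ((i : ℕ) < a ∧ (t : ℕ) = i) ∨ ((i : ℕ) = a ∧ ((t : ℕ) = a ∨ (t : ℕ) = a + 1)) ∨
      (a < (i : ℕ) ∧ (t : ℕ) = i + 1) := by
    intro i t
    rw [hs]
    dsimp only
    split_ifs with h1 h2 <;>
      simp only [mem_singleton, mem_insert, Fin.ext_iff] <;> omega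
  have hsdisj : ∀ i j : Fin (n - 1), i ≠ j → Disjoint (s i) (s j) := by
    intro i j hij
    rw [Finset.disjoint_left]
    intro t hti htj
    rw [hmem] at hti htj
    have hij' : (i : ℕ) ≠ (j : ℕ) := fun h => hij (Fin.ext h)
    omega
  refine ⟨fun i => (s i).biUnion Q, ?_, ?_, ?_, ?_⟩
  · intro i
    rw [Finset.biUnion_nonempty]
    have : ∃ t, t ∈ s i := by
      rcases lt_trichotomy (i : ℕ) a with h | h | h
      · exact ⟨⟨(i : ℕ), by omega⟩, (hmem i _).2 (Or.inl ⟨h, rfl⟩)⟩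
      · exact ⟨⟨a, by omega⟩, (hmem i _).2 (Or.inr (Or.inl ⟨h, Or.inl rfl⟩))⟩
      · exact ⟨⟨(i : ℕ) + 1, by omega⟩, (hmem i _).2 (Or.inr (Or.inr ⟨h, rfl⟩))⟩
    obtain ⟨t, ht⟩ := this
    exact ⟨t, ht, hne t⟩
  · intro i j hij
    rw [Finset.disjoint_biUnion_left]
    intro t ht
    rw [Finset.disjoint_biUnion_right]
    intro u hu
    refine hdisj t u ?_
    intro h
    exact (Finset.disjoint_left.1 (hsdisj i j hij) ht) (h ▸ hu)
  · rw [← Finset.biUnion_biUnion, ← huni]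
    congr 1
    ext t
    simp only [mem_biUnion, mem_univ, true_and, iff_true]
    rcases lt_trichotomy (t : ℕ) a with h | h | h
    · exact ⟨⟨t, by omega⟩, (hmem _ _).2 (Or.inl ⟨h, rfl⟩)⟩
    · exact ⟨⟨a, by omega⟩, (hmem _ _).2 (Or.inr (Or.inl ⟨rfl, Or.inl h⟩))⟩
    · rcases Nat.eq_or_lt_of_le h with h' | h'
      · exact ⟨⟨a, by omega⟩, (hmem _ _).2 (Or.inr (Or.inl ⟨rfl, Or.inr h'.symm⟩))⟩
      · refine ⟨⟨(t : ℕ) - 1, by omega⟩, (hmem _ _).2 (Or.inr (Or.inr ⟨by simp; omega, ?_⟩))⟩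
        simp
        omega
  · intro i
    rw [Finset.sum_biUnion]
    · rw [hs]
      dsimp only
      split_ifs with h1 h2
      · rw [Finset.sum_singleton]; exact hwt _
      · rw [Finset.sum_pair (by simp [Fin.ext_iff])]
        exact hsum
      · rw [Finset.sum_singleton]; exact hwt _
    · intro t ht u hu htu
      exact hdisj t u htu

/-- Sorting a fit partition by weights. -/
lemma sort_fitP {V : Type*} [DecidableEq V] {k : ℕ} {w : V → ℕ} {P : Finset V} {n : ℕ}
    {Q : Fin n → Finset V} (hfit : IsFitP k w P n Q) :
    ∃ Q' : Fin n → Finset V, IsFitP k w P n Q' ∧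
      (∀ i j : Fin n, i ≤ j → ∑ v ∈ Q' i, w v ≤ ∑ v ∈ Q' j, w v) := by
  obtain ⟨hne, hdisj, huni, hwt⟩ := hfit
  set f : Fin n → ℕ := fun i => ∑ v ∈ Q i, w v with hf
  set σ := Tuple.sort f with hσ
  refine ⟨Q ∘ σ, ⟨fun i => hne _, fun i j hij => hdisj _ _ (fun h => hij (σ.injective h)),
    ?_, fun i => hwt _⟩, fun i j hij => Tuple.monotone_sort f hij⟩
  rw [← huni]
  ext v
  simp only [mem_biUnion, mem_univ, true_and, Function.comp_apply]
  constructor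
  · rintro ⟨i, hi⟩; exact ⟨σ i, hi⟩
  · rintro ⟨i, hi⟩; exact ⟨σ.symm i, by simpa using hi⟩

/-- Every finite set `P` with weights in `{0, …, k−1}` admits an increasing critical fit
sequence: an ordered partition into nonempty sets of weight less than `k`, with
nondecreasing weights, and no two consecutive non-jumps. -/
theorem exists_increasing_critical_fit_sequence {V : Type*} [DecidableEq V]
    (k : ℕ) (hk : 1 ≤ k) (P : Finset V) (w : V → ℕ) (hw : ∀ v ∈ P, w v < k) :
    ∃ (n : ℕ) (Q : Fin n → Finset V),
      (∀ i, (Q i).Nonempty) ∧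
      (∀ i j, i ≠ j → Disjoint (Q i) (Q j)) ∧
      Finset.univ.biUnion Q = P ∧
      (∀ i, ∑ v ∈ Q i, w v < k) ∧
      (∀ i j : Fin n, i ≤ j → ∑ v ∈ Q i, w v ≤ ∑ v ∈ Q j, w v) ∧
      (∀ j : ℕ, 1 ≤ j → j + 1 ≤ n → ¬ (NonJump k w Q j ∧ NonJump k w Q (j + 1))) := by
  classical
  have h0 : ∃ n : ℕ, ∃ Q : Fin n → Finset V, IsFitP k w P n Q := exists_fitP k P w hw
  set n := Nat.find h0 with hn
  obtain ⟨Q₀, hQ₀⟩ := Nat.find_spec h0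
  obtain ⟨Q, ⟨hne, hdisj, huni, hwt⟩, hmono⟩ := sort_fitP hQ₀
  refine ⟨n, Q, hne, hdisj, huni, hwt, hmono, ?_⟩
  rintro j hj1 hjn ⟨hNJ1, hNJ2⟩
  -- let a := j - 1
  obtain ⟨a, rfl⟩ : ∃ a, j = a + 1 := ⟨j - 1, by omega⟩
  have ha1 : a < n := by omega
  have ha2 : a + 1 < n := by omega
  -- partial sums
  have e1 : partialW w Q (a + 1) = partialW w Q a + ∑ v ∈ Q ⟨a, ha1⟩, w v :=
    partialW_succ w Q ha1
  have e2 : partialW w Q (a + 2) = partialW w Q (a + 1) + ∑ v ∈ Q ⟨a + 1, ha2⟩, w v :=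
    partialW_succ w Q ha2
  have hNJ1' : partialW w Q (a + 1) / k = partialW w Q a / k := by
    have := hNJ1; unfold NonJump at this; simpa using this
  have hNJ2' : partialW w Q (a + 2) / k = partialW w Q (a + 1) / k := by
    have := hNJ2; unfold NonJump at this; simpa using this
  have hsum : ∑ v ∈ Q ⟨a, ha1⟩, w v + ∑ v ∈ Q ⟨a + 1, ha2⟩, w v < k := by
    set x := partialW w Q a with hx
    set y := partialW w Q (a + 2) with hy
    have hq : y / k = x / k := hNJ2'.trans hNJ1'
    have hxx : x = k * (x / k) + x % k := (Nat.div_add_mod x k).symm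
    have hyy : y = k * (y / k) + y % k := (Nat.div_add_mod y k).symm
    rw [hq] at hyy
    have hr : y % k < k := Nat.mod_lt _ (by omega)
    have hxy : y = x + (∑ v ∈ Q ⟨a, ha1⟩, w v + ∑ v ∈ Q ⟨a + 1, ha2⟩, w v) := by
      omega
    set t := k * (x / k) with ht
    omega
  have hmerge : ∃ Q' : Fin (n - 1) → Finset V, IsFitP k w P (n - 1) Q' :=
    merge_fitP ⟨hne, hdisj, huni, hwt⟩ (by omega) hsum
  exact Nat.find_min h0 (m := n - 1) (by omega) hmerge
end
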